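/- arXiv:math/0111203 — 8 statements merged into one kernel-verified Lean document; each statement's English description precedes it below -/
import Mathlib

section
/- Let G be an invertible n×n matrix over ℚ, v, w ∈ ℚⁿ, x ∈ ℚ, and x₁,…,xₙ ∈ ℚ, b₁, b₂ ∈ ℚ. Define the (n+2)×(n+2) matrix G' whose first row is (0, 1, 0,…,0), second row is (1, x, x₁,…,xₙ), and whose remaining rows are (0, xᵢ, Gᵢ) where Gᵢ is the i-th row of G. Define v' = (0, b₁, v) and w' = (0, b₂, w). Then G' is invertible and v' (G')⁻¹ (w')ᵀ = v G⁻¹ wᵀ. -/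
open Matrix

/-- Invariance of `v G⁻¹ wᵀ` under 1-handle stabilization of the Goeritz matrix. -/
theorem stmt3 (n : ℕ) (G : Matrix (Fin n) (Fin n) ℚ) (hG : IsUnit G.det)
    (v w : Fin n → ℚ) (x b₁ b₂ : ℚ) (xv : Fin n → ℚ)
    (G' : Matrix (Fin 2 ⊕ Fin n) (Fin 2 ⊕ Fin n) ℚ)
    (hG' : G' = Matrix.fromBlocks !![0, 1; 1, x]
      (Matrix.of fun i j => if i = 1 then xv j else 0)
      (Matrix.of fun i j => if j = 1 then xv i else 0) G)
    (v' w' : Fin 2 ⊕ Fin n → ℚ)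
    (hv' : v' = Sum.elim ![0, b₁] v) (hw' : w' = Sum.elim ![0, b₂] w) :
    IsUnit G'.det ∧ v' ⬝ᵥ (G'⁻¹ *ᵥ w') = v ⬝ᵥ (G⁻¹ *ᵥ w) := by
  subst hG' hv' hw'
  have hGGi : G * G⁻¹ = 1 := mul_nonsing_inv G hG
  set s : ℚ := xv ⬝ᵥ (G⁻¹ *ᵥ xv) with hs
  set M : Matrix (Fin 2 ⊕ Fin n) (Fin 2 ⊕ Fin n) ℚ :=
    Matrix.fromBlocks !![s - x, 1; 1, 0]
      (Matrix.of fun k j => if k = 0 then -((xv ᵥ* G⁻¹) j) else 0)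
      (Matrix.of fun i k => if k = 0 then -((G⁻¹ *ᵥ xv) i) else 0) G⁻¹ with hM
  have hx : G *ᵥ (G⁻¹ *ᵥ xv) = xv := by
    rw [Matrix.mulVec_mulVec, hGGi, Matrix.one_mulVec]
  have hright :
      (Matrix.fromBlocks !![(0:ℚ), 1; 1, x]
        (Matrix.of fun i j => if i = 1 then xv j else 0)
        (Matrix.of fun i j => if j = 1 then xv i else 0) G) * M = 1 := by
    rw [hM, Matrix.fromBlocks_multiply, ← Matrix.fromBlocks_one]
    ext i j
    rcases i with k | i <;> rcases j with l | j
    · -- top-left 2×2 block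
      simp only [Matrix.fromBlocks_apply₁₁]
      fin_cases k <;> fin_cases l <;>
        simp [Matrix.mul_apply, Matrix.add_apply, Fin.sum_univ_two, hs,
          dotProduct, Matrix.mulVec, Matrix.vecHead, Matrix.vecTail,
          Function.comp, Fin.mk_zero, Fin.mk_one, Finset.mul_sum, mul_comm]
    · -- top-right block
      simp only [Matrix.fromBlocks_apply₁₂]
      fin_cases k <;>
        simp [Matrix.mul_apply, Matrix.add_apply, Fin.sum_univ_two,
          Matrix.vecMul, dotProduct, Matrix.vecHead, Matrix.vecTail,
          Function.comp, Fin.mk_zero, Fin.mk_one, mul_comm]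
    · -- bottom-left block
      simp only [Matrix.fromBlocks_apply₂₁]
      have h := congrFun hx i
      simp [Matrix.mulVec, dotProduct, mul_comm] at h
      fin_cases l <;>
        simp [Matrix.mul_apply, Matrix.add_apply, Fin.sum_univ_two,
          Matrix.mulVec, dotProduct, Matrix.vecHead, Matrix.vecTail,
          Function.comp, Fin.mk_zero, Fin.mk_one, mul_comm] <;>
        linarith [h]
    · -- bottom-right block
      simp only [Matrix.fromBlocks_apply₂₂]
      have h := congrFun (congrFun hGGi i) j
      simp [Matrix.mul_apply] at h ⊢
      simpa [Fin.sum_univ_two, Fintype.sum_sum_type] using h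
  refine ⟨Matrix.isUnit_det_of_right_inverse hright, ?_⟩
  rw [Matrix.inv_eq_right_inv hright, hM]
  rw [Matrix.fromBlocks_mulVec, sumElim_dotProduct_sumElim]
  simp [Matrix.mulVec, dotProduct, Fin.sum_univ_two, Matrix.vecHead,
    Matrix.vecTail, Function.comp, mul_add, add_mul, Finset.sum_add_distrib]
end

section
/- Let G be an invertible n×n matrix over a field, v, w ∈ Fⁿ. There exist invertible matrices P and Q (products of elementary matrices) such that P G' Q equals the block matrix with top-left 2×2 block [[0,1],[1,0]], zero off-diagonal blocks, and G in the bottom-right block, where G' is as in the 1-handle stabilization (first row (0,1,0,…,0), second row (1,x,x₁,…,xₙ), rows (0,xᵢ,Gᵢ)); moreover P and Q can be chosen so that v'Q = v' and P(w')ᵀ = (w')ᵀ for v' = (0,b₁,v), w' = (0,b₂,w). -/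
open Matrix

section aux
variable {F : Type*} [Field F] {ι : Type*} [Fintype ι] [DecidableEq ι]

lemma aux_mul_vmv (M : Matrix ι ι F) (c d : ι → F) :
    M * vecMulVec c d = vecMulVec (M *ᵥ c) d := by
  ext i j
  simp [mul_apply, vecMulVec_apply, mulVec, dotProduct, Finset.sum_mul, mul_assoc]

lemma aux_vmv_mul (M : Matrix ι ι F) (c d : ι → F) :
    vecMulVec c d * M = vecMulVec c (d ᵥ* M) := by
  ext i j
  simp [mul_apply, vecMulVec_apply, vecMul, dotProduct, Finset.mul_sum, mul_assoc]

lemma aux_vecMul_vmv (u c d : ι → F) :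
    u ᵥ* vecMulVec c d = (u ⬝ᵥ c) • d := by
  ext j
  simp [vecMul, vecMulVec_apply, dotProduct, Finset.sum_mul, mul_assoc]

lemma aux_vmv_mulVec (c d u : ι → F) :
    vecMulVec c d *ᵥ u = (d ⬝ᵥ u) • c := by
  ext i
  simp [mulVec, vecMulVec_apply, dotProduct, Finset.mul_sum, mul_assoc, mul_comm, mul_left_comm]
end aux

/-- Key linear-algebra step of Proposition 2.1: the stabilized matrix `G'` can be
brought by invertible row and column operations to the block sum of `[[0,1],[1,0]]`
and `G`, in a way fixing the stabilized vectors `v'`, `w'`. -/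
theorem stmt4 (F : Type*) [Field F] (n : ℕ)
    (G : Matrix (Fin n) (Fin n) F) (hG : IsUnit G.det)
    (v w : Fin n → F) (x b₁ b₂ : F) (xv : Fin n → F)
    (G' : Matrix (Fin 2 ⊕ Fin n) (Fin 2 ⊕ Fin n) F)
    (hG' : G' = Matrix.fromBlocks !![0, 1; 1, x]
      (Matrix.of fun i j => if i = 1 then xv j else 0)
      (Matrix.of fun i j => if j = 1 then xv i else 0) G)
    (v' w' : Fin 2 ⊕ Fin n → F)
    (hv' : v' = Sum.elim ![0, b₁] v) (hw' : w' = Sum.elim ![0, b₂] w) :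
    ∃ P Q : Matrix (Fin 2 ⊕ Fin n) (Fin 2 ⊕ Fin n) F,
      IsUnit P.det ∧ IsUnit Q.det ∧
      P * G' * Q = Matrix.fromBlocks !![0, 1; 1, 0] 0 0 G ∧
      v' ᵥ* Q = v' ∧ P *ᵥ w' = w' := by
  set e₀ : Fin 2 ⊕ Fin n → F := Pi.single (Sum.inl 0) 1 with he₀
  set e₁ : Fin 2 ⊕ Fin n → F := Pi.single (Sum.inl 1) 1 with he₁
  set c : Fin 2 ⊕ Fin n → F := Sum.elim ![0, -x] (fun i => -xv i) with hc
  set r : Fin 2 ⊕ Fin n → F := Sum.elim ![0, 0] (fun j => -xv j) with hr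
  refine ⟨1 + vecMulVec c e₀, 1 + vecMulVec e₀ r, ?_, ?_, ?_, ?_, ?_⟩
  · -- det P : inverse is 1 - vecMulVec c e₀
    have h : (1 + vecMulVec c e₀) * (1 - vecMulVec c e₀) = 1 := by
      have h2 : vecMulVec c e₀ * vecMulVec c e₀ = 0 := by
        rw [aux_vmv_mul, aux_vecMul_vmv]
        have h3 : e₀ ⬝ᵥ c = 0 := by simp [he₀, hc, dotProduct]
        rw [h3, zero_smul]
        ext i j
        simp [vecMulVec_apply]
      rw [mul_sub, mul_one, add_mul, one_mul, h2]
      abel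
    exact Matrix.isUnit_det_of_right_inverse h
  · have h : (1 + vecMulVec e₀ r) * (1 - vecMulVec e₀ r) = 1 := by
      have h2 : vecMulVec e₀ r * vecMulVec e₀ r = 0 := by
        rw [aux_vmv_mul, aux_vecMul_vmv]
        have h3 : r ⬝ᵥ e₀ = 0 := by simp [he₀, hr, dotProduct]
        rw [h3, zero_smul]
        ext i j
        simp [vecMulVec_apply]
      rw [mul_sub, mul_one, add_mul, one_mul, h2]
      abel
    exact Matrix.isUnit_det_of_right_inverse h
  · -- main product
    have hrow : e₀ ᵥ* G' = e₁ := by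
      ext j
      cases j with
      | inl j => fin_cases j <;> simp [hG', he₀, he₁, single_vecMul, Pi.single_apply]
      | inr j => simp [hG', he₀, he₁, single_vecMul, Pi.single_apply]
    have hcol : G' *ᵥ e₀ = e₁ := by
      ext i
      cases i with
      | inl i => fin_cases i <;> simp [hG', he₀, he₁, mulVec_single, Pi.single_apply]
      | inr i => simp [hG', he₀, he₁, mulVec_single, Pi.single_apply]
    have expand : (1 + vecMulVec c e₀) * G' * (1 + vecMulVec e₀ r)
        = G' + vecMulVec c e₁ + vecMulVec e₁ r + vecMulVec c ((e₁ ⬝ᵥ e₀) • r) := by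
      rw [add_mul, one_mul, aux_vmv_mul, hrow, mul_add, mul_one, add_mul,
        aux_mul_vmv, hcol, aux_vmv_mul, aux_vecMul_vmv]
      abel
    rw [expand]
    have hee : (e₁ ⬝ᵥ e₀ : F) = 0 := by simp [he₀, he₁, dotProduct]
    rw [hee, zero_smul]
    have hz : vecMulVec c (0 : Fin 2 ⊕ Fin n → F) = 0 := by
      ext i j; simp [vecMulVec_apply]
    rw [hz, add_zero]
    ext i j
    cases i with
    | inl i =>
      cases j with
      | inl j =>
        fin_cases i <;> fin_cases j <;>
          simp [hG', he₀, he₁, hc, hr, vecMulVec_apply, fromBlocks, Pi.single_apply]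
      | inr j =>
        fin_cases i <;>
          simp [hG', he₀, he₁, hc, hr, vecMulVec_apply, fromBlocks, Pi.single_apply]
    | inr i =>
      cases j with
      | inl j =>
        fin_cases j <;>
          simp [hG', he₀, he₁, hc, hr, vecMulVec_apply, fromBlocks, Pi.single_apply]
      | inr j =>
        simp [hG', he₀, he₁, hc, hr, vecMulVec_apply, fromBlocks, Pi.single_apply]
  · rw [vecMul_add, vecMul_one, aux_vecMul_vmv]
    have : v' ⬝ᵥ e₀ = 0 := by simp [hv', he₀, dotProduct]
    simp [this]
  · rw [add_mulVec, one_mulVec, aux_vmv_mulVec]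
    have : e₀ ⬝ᵥ w' = 0 := by simp [hw', he₀, dotProduct]
    simp [this]
end

section
/- Let M be an n×n matrix over ℤ with det(tM − Mᵀ) not identically zero, and let v, w ∈ ℤⁿ. Define λ(t) = v (tM − Mᵀ)⁻¹ wᵀ ∈ ℚ(t) and μ(t) = w (tM − Mᵀ)⁻¹ vᵀ ∈ ℚ(t). Then μ(t) = −t⁻¹ · λ(t⁻¹); in particular λ(t) and μ(t⁻¹) agree up to multiplication by a unit of ℤ[t, t⁻¹] after clearing denominators. -/
open Matrix

/-- Symmetry of the linking function: `μ(t) = -t⁻¹ λ(t⁻¹)`, i.e.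
`w (tM - Mᵀ)⁻¹ vᵀ = -t⁻¹ ⬝ v (t⁻¹M - Mᵀ)⁻¹ wᵀ`, for any `t ≠ 0` in a field
extension of `ℚ` at which `det (tM - Mᵀ) ≠ 0`. -/
theorem stmt7 (F : Type*) [Field F] [Algebra ℚ F] (n : ℕ)
    (M : Matrix (Fin n) (Fin n) ℤ)
    (Mc : Matrix (Fin n) (Fin n) F) (hMc : Mc = M.map (Int.cast : ℤ → F))
    (v w : Fin n → ℤ) (vc wc : Fin n → F)
    (hvc : vc = fun i => (v i : F)) (hwc : wc = fun i => (w i : F))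
    (t : F) (ht : t ≠ 0) (hdet : (t • Mc - Mcᵀ).det ≠ 0) :
    wc ⬝ᵥ ((t • Mc - Mcᵀ)⁻¹ *ᵥ vc) =
      -t⁻¹ * (vc ⬝ᵥ ((t⁻¹ • Mc - Mcᵀ)⁻¹ *ᵥ wc)) := by
  set A := t • Mc - Mcᵀ with hA
  have hAT : IsUnit Aᵀ.det := by
    rw [Matrix.det_transpose]; exact hdet.isUnit
  have key : t⁻¹ • Mc - Mcᵀ = (-t⁻¹) • Aᵀ := by
    ext i j
    simp only [hA, Matrix.sub_apply, Matrix.smul_apply, Matrix.transpose_apply,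
      neg_smul, smul_eq_mul, neg_mul, Matrix.neg_apply, mul_sub]
    field_simp
    ring
  have hinv : (t⁻¹ • Mc - Mcᵀ)⁻¹ = (-t) • (A⁻¹)ᵀ := by
    rw [key]
    haveI : Invertible (-t⁻¹) := invertibleOfNonzero (by simp [ht])
    rw [Matrix.inv_smul (A := Aᵀ) (-t⁻¹) hAT, Matrix.transpose_nonsing_inv]
    congr 1
    rw [invOf_eq_inv]
    field_simp
  rw [hinv]
  rw [Matrix.smul_mulVec, dotProduct_smul, Matrix.mulVec_transpose,
    Matrix.dotProduct_mulVec, dotProduct_comm, smul_eq_mul]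
  field_simp
end

section
/- Let G be an invertible Hermitian n×n complex matrix, v ∈ ℂⁿ a row vector, c ∈ ℝ with c ≠ 0, and set λ = v G⁻¹ v*. Let a = 1 − ω ≠ 0 and ε = ±1, and consider the (n+2)×(n+2) Hermitian matrix H = [[0, ā, ε ā v],[a, −c|a|², 0],[ε a v*, 0, G]]. If H is invertible, then c·|a|²·λ ≠ 1, and H is congruent (via U H U* for an invertible complex matrix U) to the block diagonal matrix diag(1/c − |a|²λ, −c|a|², G); consequently sign(H) = sign(G) + sign(1/c − |a|²λ) + sign(−c). -/
open Matrix Complex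

/-- Signature (number of positive minus number of negative eigenvalues) of a
Hermitian complex matrix. -/
noncomputable def hermSig {m : Type*} [Fintype m] [DecidableEq m]
    (A : Matrix m m ℂ) (hA : A.IsHermitian) : ℤ :=
  ((Finset.univ.filter fun i => 0 < hA.eigenvalues i).card : ℤ) -
    ((Finset.univ.filter fun i => hA.eigenvalues i < 0).card : ℤ)

namespace Stmt9Aux

set_option linter.unusedSectionVars false

variable {m : Type*} [Fintype m] {k : Type*} [Fintype k]

/-- The (real part of the) Hermitian form associated to a complex matrix. -/
noncomputable def qf (A : Matrix m m ℂ) (x : m → ℂ) : ℝ :=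
  (star x ⬝ᵥ A *ᵥ x).re

/-- `A` is positive definite on the subspace `W`. -/
def PosOn (A : Matrix m m ℂ) (W : Submodule ℂ (m → ℂ)) : Prop :=
  ∀ x ∈ W, x ≠ 0 → 0 < qf A x

/-- `A` is negative semidefinite on the subspace `W`. -/
def NonposOn (A : Matrix m m ℂ) (W : Submodule ℂ (m → ℂ)) : Prop :=
  ∀ x ∈ W, qf A x ≤ 0

/-- `p` is the dimension of a maximal positive subspace for `A`, witnessed by a
positive subspace of dimension `p` and a negative semidefinite subspace of
complementary dimension. -/
def IsMaxPos (A : Matrix m m ℂ) (p : ℕ) : Prop :=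
  (∃ W, PosOn A W ∧ Module.finrank ℂ W = p) ∧
  (∃ W, NonposOn A W ∧ Module.finrank ℂ W = Fintype.card m - p) ∧
  p ≤ Fintype.card m

lemma qf_zero (A : Matrix m m ℂ) : qf A 0 = 0 := by simp [qf]

lemma disjoint_pos_nonpos {A : Matrix m m ℂ} {W W' : Submodule ℂ (m → ℂ)}
    (hW : PosOn A W) (hW' : NonposOn A W') : W ⊓ W' = ⊥ := by
  rw [Submodule.eq_bot_iff]
  rintro x ⟨hx1, hx2⟩
  by_contra hx
  exact absurd (hW' x hx2) (not_le.2 (hW x hx1 hx))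

lemma finrank_add_le_of_disjoint {W W' : Submodule ℂ (m → ℂ)} (h : W ⊓ W' = ⊥) :
    Module.finrank ℂ W + Module.finrank ℂ W' ≤ Fintype.card m := by
  have h1 := Submodule.finrank_sup_add_finrank_inf_eq W W'
  rw [h] at h1
  simp only [finrank_bot, add_zero] at h1
  rw [← h1]
  have h2 := Submodule.finrank_le (W ⊔ W')
  rwa [Module.finrank_fintype_fun_eq_card] at h2

/-- Sylvester-style uniqueness: the maximal positive dimension is well defined. -/
lemma IsMaxPos.unique {A : Matrix m m ℂ} {p p' : ℕ}
    (h : IsMaxPos A p) (h' : IsMaxPos A p') : p = p' := by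
  obtain ⟨⟨W, hW, hWr⟩, ⟨Wn, hWn, hWnr⟩, hple⟩ := h
  obtain ⟨⟨W', hW', hWr'⟩, ⟨Wn', hWn', hWnr'⟩, hple'⟩ := h'
  have h1 := finrank_add_le_of_disjoint (disjoint_pos_nonpos hW hWn')
  have h2 := finrank_add_le_of_disjoint (disjoint_pos_nonpos hW' hWn)
  rw [hWr, hWnr'] at h1
  rw [hWr', hWnr] at h2
  omega

section Congruence

variable [DecidableEq m]

lemma qf_congr (A U : Matrix m m ℂ) (x : m → ℂ) :
    qf (U * A * Uᴴ) x = qf A (Uᴴ *ᵥ x) := by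
  unfold qf
  congr 1
  have h1 : star (Uᴴ *ᵥ x) = star x ᵥ* Uᴴᴴ := star_mulVec _ _
  rw [h1, conjTranspose_conjTranspose, ← mulVec_mulVec, ← mulVec_mulVec, dotProduct_mulVec]

/-- The linear equivalence of `m → ℂ` given by multiplication by an invertible matrix. -/
noncomputable def mulVecEquiv (N : Matrix m m ℂ) (hN : IsUnit N.det) :
    (m → ℂ) ≃ₗ[ℂ] (m → ℂ) where
  toFun := N.mulVec
  map_add' := mulVec_add N
  map_smul' := mulVec_smul N
  invFun := N⁻¹.mulVec
  left_inv := fun x => by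
    show N⁻¹ *ᵥ (N *ᵥ x) = x
    rw [mulVec_mulVec, nonsing_inv_mul N hN, one_mulVec]
  right_inv := fun x => by
    show N *ᵥ (N⁻¹ *ᵥ x) = x
    rw [mulVec_mulVec, mul_nonsing_inv N hN, one_mulVec]

/-- Sylvester's law of inertia, existence part: congruence preserves maximal
positive dimension. -/
lemma IsMaxPos.congruence {A : Matrix m m ℂ} {p : ℕ} (U : Matrix m m ℂ)
    (hU : IsUnit U.det) (h : IsMaxPos A p) : IsMaxPos (U * A * Uᴴ) p := by
  have hUH : IsUnit Uᴴ.det := by rw [det_conjTranspose]; exact hU.star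
  have hUHi : IsUnit (Uᴴ)⁻¹.det := isUnit_nonsing_inv_det _ hUH
  set e := mulVecEquiv (Uᴴ)⁻¹ hUHi with he
  have key : ∀ x : m → ℂ, qf (U * A * Uᴴ) (e x) = qf A x := by
    intro x
    rw [qf_congr]
    congr 1
    show Uᴴ *ᵥ ((Uᴴ)⁻¹ *ᵥ x) = x
    rw [mulVec_mulVec, mul_nonsing_inv _ hUH, one_mulVec]
  obtain ⟨⟨W, hW, hWr⟩, ⟨Wn, hWn, hWnr⟩, hple⟩ := h
  refine ⟨⟨W.map (e : (m → ℂ) →ₗ[ℂ] (m → ℂ)), ?_, ?_⟩,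
    ⟨Wn.map (e : (m → ℂ) →ₗ[ℂ] (m → ℂ)), ?_, ?_⟩, hple⟩
  · rintro y hy hy0
    obtain ⟨x, hx, rfl⟩ := Submodule.mem_map.1 hy
    have hx0 : x ≠ 0 := fun h0 => hy0 (by rw [h0]; exact map_zero _)
    rw [show ((e : (m → ℂ) →ₗ[ℂ] (m → ℂ)) x) = e x from rfl, key]
    exact hW x hx hx0
  · rw [LinearEquiv.finrank_map_eq]; exact hWr
  · rintro y hy
    obtain ⟨x, hx, rfl⟩ := Submodule.mem_map.1 hy
    rw [show ((e : (m → ℂ) →ₗ[ℂ] (m → ℂ)) x) = e x from rfl, key]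
    exact hWn x hx
  · rw [LinearEquiv.finrank_map_eq]; exact hWnr

end Congruence

section Diagonal

variable [DecidableEq m]

/-- The subspace of vectors supported on a given finite set of coordinates. -/
noncomputable def coordSub (s : Finset m) : Submodule ℂ (m → ℂ) where
  carrier := {x | ∀ i ∉ s, x i = 0}
  add_mem' := fun ha hb i hi => by simp [ha i hi, hb i hi]
  zero_mem' := fun i _ => rfl
  smul_mem' := fun c x hx i hi => by simp [hx i hi]

noncomputable def coordSubEquiv (s : Finset m) : coordSub s ≃ₗ[ℂ] ({i // i ∈ s} → ℂ) where
  toFun := fun x i => (x : m → ℂ) i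
  map_add' := fun a b => rfl
  map_smul' := fun c a => rfl
  invFun := fun y => ⟨fun i => if h : i ∈ s then y ⟨i, h⟩ else 0, fun i hi => dif_neg hi⟩
  left_inv := fun x => by
    ext i
    by_cases h : i ∈ s
    · simp [h]
    · simp [h, x.2 i h]
  right_inv := fun y => by
    ext ⟨i, h⟩
    simp [h]

lemma finrank_coordSub (s : Finset m) : Module.finrank ℂ (coordSub s) = s.card := by
  rw [LinearEquiv.finrank_eq (coordSubEquiv s), Module.finrank_fintype_fun_eq_card,
    Fintype.card_coe]

lemma qf_diagonal (d : m → ℝ) (x : m → ℂ) :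
    qf (diagonal fun i => (d i : ℂ)) x = ∑ i, d i * Complex.normSq (x i) := by
  unfold qf
  rw [dotProduct, Complex.re_sum]
  congr 1; ext i
  simp [mulVec_diagonal, Complex.normSq_apply, Pi.star_apply, Complex.mul_re]
  ring

lemma isMaxPos_diagonal (d : m → ℝ) :
    IsMaxPos (diagonal fun i => (d i : ℂ)) ((Finset.univ.filter fun i => 0 < d i).card) := by
  have hcard := Finset.card_filter_add_card_filter_not (s := Finset.univ)
    (p := fun i => 0 < d i)
  rw [Finset.card_univ] at hcard
  refine ⟨⟨coordSub (Finset.univ.filter fun i => 0 < d i), ?_, finrank_coordSub _⟩,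
    ⟨coordSub (Finset.univ.filter fun i => ¬ 0 < d i), ?_, ?_⟩, ?_⟩
  · intro x hx hx0
    rw [qf_diagonal]
    have hne : ∃ j, x j ≠ 0 := by
      by_contra h
      push_neg at h
      exact hx0 (funext h)
    obtain ⟨j, hj⟩ := hne
    have hjs : 0 < d j := by
      by_contra hjs
      exact hj (hx j (by simp [hjs]))
    refine Finset.sum_pos' (fun i _ => ?_) ⟨j, Finset.mem_univ j, ?_⟩
    · by_cases hi : 0 < d i
      · exact mul_nonneg hi.le (Complex.normSq_nonneg _)
      · rw [hx i (by simp [hi])]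
        simp
    · have hns : 0 < Complex.normSq (x j) := by
        simpa [Complex.normSq_pos] using hj
      exact mul_pos hjs hns
  · intro x hx
    rw [qf_diagonal]
    refine Finset.sum_nonpos fun i _ => ?_
    by_cases hi : 0 < d i
    · rw [hx i (by simp [hi])]
      simp
    · push_neg at hi
      have := Complex.normSq_nonneg (x i)
      exact mul_nonpos_of_nonpos_of_nonneg (by linarith) this
  · rw [finrank_coordSub]
    omega
  · exact Finset.card_filter_le _ _

end Diagonal

section Blocks

/-- The "direct sum" of two coordinate subspaces inside `(m ⊕ k) → ℂ`. -/
noncomputable def sumSub (W : Submodule ℂ (m → ℂ)) (W' : Submodule ℂ (k → ℂ)) :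
    Submodule ℂ (m ⊕ k → ℂ) where
  carrier := {z | (z ∘ Sum.inl) ∈ W ∧ (z ∘ Sum.inr) ∈ W'}
  add_mem' := fun ha hb => ⟨W.add_mem ha.1 hb.1, W'.add_mem ha.2 hb.2⟩
  zero_mem' := ⟨W.zero_mem, W'.zero_mem⟩
  smul_mem' := fun c _ hz => ⟨W.smul_mem c hz.1, W'.smul_mem c hz.2⟩

noncomputable def sumSubEquiv (W : Submodule ℂ (m → ℂ)) (W' : Submodule ℂ (k → ℂ)) :
    sumSub W W' ≃ₗ[ℂ] W × W' where
  toFun := fun z => (⟨(z : m ⊕ k → ℂ) ∘ Sum.inl, z.2.1⟩, ⟨(z : m ⊕ k → ℂ) ∘ Sum.inr, z.2.2⟩)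
  map_add' := fun a b => rfl
  map_smul' := fun c a => rfl
  invFun := fun p => ⟨Sum.elim (p.1 : m → ℂ) (p.2 : k → ℂ),
    by rw [Sum.elim_comp_inl]; exact p.1.2,
    by rw [Sum.elim_comp_inr]; exact p.2.2⟩
  left_inv := fun z => Subtype.ext (Sum.elim_comp_inl_inr _)
  right_inv := fun p => by
    refine Prod.ext (Subtype.ext ?_) (Subtype.ext ?_)
    · funext i; rfl
    · funext i; rfl

lemma finrank_sumSub (W : Submodule ℂ (m → ℂ)) (W' : Submodule ℂ (k → ℂ)) :
    Module.finrank ℂ (sumSub W W') = Module.finrank ℂ W + Module.finrank ℂ W' := by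
  rw [LinearEquiv.finrank_eq (sumSubEquiv W W'), Module.finrank_prod]

lemma star_sum_elim (u : m → ℂ) (v : k → ℂ) :
    star (Sum.elim u v) = Sum.elim (star u) (star v) := by
  funext i
  cases i <;> rfl

lemma qf_fromBlocks (A : Matrix m m ℂ) (B : Matrix k k ℂ) (z : m ⊕ k → ℂ) :
    qf (fromBlocks A 0 0 B) z = qf A (z ∘ Sum.inl) + qf B (z ∘ Sum.inr) := by
  unfold qf
  rw [← Complex.add_re]
  congr 1
  conv_lhs => rw [← Sum.elim_comp_inl_inr z]
  rw [fromBlocks_mulVec]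
  simp only [Sum.elim_comp_inl, Sum.elim_comp_inr, zero_mulVec, add_zero, zero_add]
  rw [star_sum_elim, sumElim_dotProduct_sumElim]

lemma IsMaxPos.sum_blocks {A : Matrix m m ℂ} {B : Matrix k k ℂ} {p q : ℕ}
    (hA : IsMaxPos A p) (hB : IsMaxPos B q) :
    IsMaxPos (fromBlocks A 0 0 B) (p + q) := by
  obtain ⟨⟨W, hW, hWr⟩, ⟨Wn, hWn, hWnr⟩, hple⟩ := hA
  obtain ⟨⟨W', hW', hWr'⟩, ⟨Wn', hWn', hWnr'⟩, hple'⟩ := hB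
  refine ⟨⟨sumSub W W', ?_, ?_⟩, ⟨sumSub Wn Wn', ?_, ?_⟩, ?_⟩
  · rintro z ⟨hz1, hz2⟩ hz0
    rw [qf_fromBlocks]
    have h1 : 0 ≤ qf A (z ∘ Sum.inl) := by
      by_cases h : z ∘ Sum.inl = 0
      · rw [h, qf_zero]
      · exact (hW _ hz1 h).le
    have h2 : 0 ≤ qf B (z ∘ Sum.inr) := by
      by_cases h : z ∘ Sum.inr = 0
      · rw [h, qf_zero]
      · exact (hW' _ hz2 h).le
    have h3 : z ∘ Sum.inl ≠ 0 ∨ z ∘ Sum.inr ≠ 0 := by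
      by_contra h
      push_neg at h
      apply hz0
      funext i
      cases i with
      | inl i => exact congrFun h.1 i
      | inr i => exact congrFun h.2 i
    rcases h3 with h | h
    · have := hW _ hz1 h; linarith
    · have := hW' _ hz2 h; linarith
  · rw [finrank_sumSub, hWr, hWr']
  · rintro z ⟨hz1, hz2⟩
    rw [qf_fromBlocks]
    have := hWn _ hz1
    have := hWn' _ hz2
    linarith
  · rw [finrank_sumSub, hWnr, hWnr', Fintype.card_sum]
    omega
  · rw [Fintype.card_sum]
    omega

end Blocks

section Spectral

variable [DecidableEq m]

lemma spectral (A : Matrix m m ℂ) (hA : A.IsHermitian) :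
    A = (hA.eigenvectorUnitary : Matrix m m ℂ) *
      (diagonal fun i => ((hA.eigenvalues i : ℝ) : ℂ)) *
      ((hA.eigenvectorUnitary : Matrix m m ℂ))ᴴ := by
  conv_lhs => rw [hA.spectral_theorem]
  rfl

lemma eigenvectorUnitary_det_isUnit (A : Matrix m m ℂ) (hA : A.IsHermitian) :
    IsUnit ((hA.eigenvectorUnitary : Matrix m m ℂ)).det := by
  apply IsUnit.of_mul_eq_one (star (hA.eigenvectorUnitary : Matrix m m ℂ)).det
  rw [← det_mul, (Unitary.mem_iff.mp hA.eigenvectorUnitary.2).2, det_one]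

/-- The number of positive eigenvalues of a Hermitian matrix realizes the maximal
positive dimension, and the number of negative eigenvalues realizes the maximal
positive dimension of `-A`. -/
lemma isMaxPos_eigen (A : Matrix m m ℂ) (hA : A.IsHermitian) :
    IsMaxPos A ((Finset.univ.filter fun i => 0 < hA.eigenvalues i).card) ∧
    IsMaxPos (-A) ((Finset.univ.filter fun i => hA.eigenvalues i < 0).card) := by
  have hU := eigenvectorUnitary_det_isUnit A hA
  constructor
  · have h1 := (isMaxPos_diagonal hA.eigenvalues).congruence _ hU
    rwa [← spectral A hA] at h1
  · have h1 := (isMaxPos_diagonal (-hA.eigenvalues)).congruence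
      (hA.eigenvectorUnitary : Matrix m m ℂ) hU
    have h2 : (diagonal fun i => ((((-hA.eigenvalues) i : ℝ)) : ℂ)) =
        -(diagonal fun i => ((hA.eigenvalues i : ℝ) : ℂ)) := by
      ext i j
      rw [Matrix.neg_apply]
      by_cases hij : i = j
      · subst hij
        simp
      · simp [Matrix.diagonal_apply_ne _ hij]
    rw [h2] at h1
    have h3 : (hA.eigenvectorUnitary : Matrix m m ℂ) *
        -(diagonal fun i => ((hA.eigenvalues i : ℝ) : ℂ)) *
        ((hA.eigenvectorUnitary : Matrix m m ℂ))ᴴ = -A := by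
      rw [Matrix.mul_neg, Matrix.neg_mul, ← spectral A hA]
    rw [h3] at h1
    have h4 : (Finset.univ.filter fun i => 0 < (-hA.eigenvalues) i) =
        (Finset.univ.filter fun i => hA.eigenvalues i < 0) := by
      apply Finset.filter_congr
      intro i _
      simp [neg_pos]
    rwa [h4] at h1

end Spectral

end Stmt9Aux

open Stmt9Aux
set_option maxHeartbeats 1000000

/-- The congruence computation of Theorem 5.1: the stabilized Hermitian matrix `H`
is congruent to `diag(1/c - |a|²λ, -c|a|², G)`; in particular if `H` is invertible
then `c|a|²λ ≠ 1`, and `sign H = sign G + sign (1/c - |a|²λ) + sign (-c)`. -/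
theorem stmt9 (n : ℕ) (G : Matrix (Fin n) (Fin n) ℂ)
    (hGherm : G.IsHermitian) (hGinv : IsUnit G.det)
    (v : Fin n → ℂ) (c : ℝ) (hc : c ≠ 0) (ω a ε : ℂ)
    (ha : a = 1 - ω) (hω : ω ≠ 1) (hε : ε = 1 ∨ ε = -1)
    (lam : ℂ) (hlam : lam = v ⬝ᵥ (G⁻¹ *ᵥ fun i => (starRingEnd ℂ) (v i)))
    (H : Matrix (Fin 2 ⊕ Fin n) (Fin 2 ⊕ Fin n) ℂ)
    (hH : H = Matrix.fromBlocks
      !![0, (starRingEnd ℂ) a; a, -(c : ℂ) * (Complex.normSq a : ℂ)]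
      (Matrix.of fun i j => if i = 0 then ε * (starRingEnd ℂ) a * v j else 0)
      (Matrix.of fun i j => if j = 0 then ε * a * (starRingEnd ℂ) (v i) else 0)
      G)
    (hHinv : IsUnit H.det) :
    (c : ℂ) * (Complex.normSq a : ℂ) * lam ≠ 1 ∧
    (∃ U : Matrix (Fin 2 ⊕ Fin n) (Fin 2 ⊕ Fin n) ℂ, IsUnit U.det ∧
      U * H * Uᴴ = Matrix.fromBlocks
        !![(1 / (c : ℂ)) - (Complex.normSq a : ℂ) * lam, 0;
           0, -(c : ℂ) * (Complex.normSq a : ℂ)] 0 0 G) ∧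
    ∃ lr : ℝ, lam = (lr : ℂ) ∧
      ∀ (hHh : H.IsHermitian) (hGh : G.IsHermitian),
        (hermSig H hHh : ℝ) =
          (hermSig G hGh : ℝ) + Real.sign (1 / c - Complex.normSq a * lr) +
            Real.sign (-c) := by
  -- basic nonvanishing facts
  have ha0 : a ≠ 0 := by
    rw [ha, sub_ne_zero]
    exact fun h => hω h.symm
  have hc0 : (c : ℂ) ≠ 0 := Complex.ofReal_ne_zero.mpr hc
  have hna : 0 < Complex.normSq a := Complex.normSq_pos.mpr ha0
  have hconjε : (starRingEnd ℂ) ε = ε := by rcases hε with h | h <;> simp [h]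
  have hεε : ε * (starRingEnd ℂ) ε = 1 := by rcases hε with h | h <;> simp [h]
  have hnsq : ((Complex.normSq a : ℝ) : ℂ) = (starRingEnd ℂ) a * a := by
    rw [Complex.normSq_eq_conj_mul_self]
  set A2 : Matrix (Fin 2) (Fin 2) ℂ :=
    !![0, (starRingEnd ℂ) a; a, -(c : ℂ) * (Complex.normSq a : ℂ)] with hA2
  set B : Matrix (Fin 2) (Fin n) ℂ :=
    Matrix.of fun i j => if i = 0 then ε * (starRingEnd ℂ) a * v j else 0 with hB
  have hCB : (Matrix.of fun i j => if j = 0 then ε * a * (starRingEnd ℂ) (v i) else 0 :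
      Matrix (Fin n) (Fin 2) ℂ) = Bᴴ := by
    ext i j
    by_cases hj : j = 0
    · simp [hB, hj, conjTranspose_apply, hconjε]
      try ring
    · simp [hB, hj, conjTranspose_apply]
  have hH' : H = fromBlocks A2 B Bᴴ G := by rw [hH, hCB]
  set M : Matrix (Fin 2) (Fin 2) ℂ := !![(Complex.normSq a : ℂ) * lam, 0; 0, 0] with hM
  have hBGB : B * G⁻¹ * Bᴴ = M := by
    rw [hB, hM]
    ext i j
    fin_cases i <;> fin_cases j <;>
      simp [Matrix.mul_apply, hlam, dotProduct, mulVec, Finset.mul_sum, Finset.sum_mul]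
    rw [Finset.sum_comm]
    apply Finset.sum_congr rfl
    intro k _
    apply Finset.sum_congr rfl
    intro l _
    rw [hnsq]
    linear_combination ((starRingEnd ℂ) a * a * v k * G⁻¹ k l * (starRingEnd ℂ) (v l)) * hεε
  set U2 : Matrix (Fin 2) (Fin 2) ℂ := !![1, 1 / ((c : ℂ) * a); 0, 1] with hU2
  set T : Matrix (Fin 2) (Fin 2) ℂ :=
    !![(1 / (c : ℂ)) - (Complex.normSq a : ℂ) * lam, 0;
       0, -(c : ℂ) * (Complex.normSq a : ℂ)] with hT
  have hAM : A2 - M =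
      !![-(Complex.normSq a : ℂ) * lam, (starRingEnd ℂ) a;
         a, -(c : ℂ) * (Complex.normSq a : ℂ)] := by
    ext i j
    fin_cases i <;> fin_cases j <;> simp [hA2, hM] <;> ring
  have hU2T : U2 * (A2 - M) * U2ᴴ = T := by
    rw [hAM, hU2, hT]
    have ha' : (starRingEnd ℂ) a ≠ 0 := by simpa using ha0
    ext i j
    fin_cases i <;> fin_cases j <;>
      simp [Matrix.mul_apply, Fin.sum_univ_two, conjTranspose_apply, hnsq, map_div₀] <;>
      field_simp <;> ring
  set U : Matrix (Fin 2 ⊕ Fin n) (Fin 2 ⊕ Fin n) ℂ :=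
    fromBlocks U2 (U2 * -(B * G⁻¹)) 0 1 with hU
  -- the congruence
  have hUHU : U * H * Uᴴ = fromBlocks T 0 0 G := by
    rw [hH', hU]
    set X := -(B * G⁻¹) with hX
    have hGiG : G⁻¹ * G = 1 := nonsing_inv_mul G hGinv
    have hGGi : G * G⁻¹ = 1 := mul_nonsing_inv G hGinv
    have hGiH : (G⁻¹)ᴴ = G⁻¹ := by rw [conjTranspose_nonsing_inv, hGherm.eq]
    have hXH : Xᴴ = -(G⁻¹ * Bᴴ) := by
      rw [hX, conjTranspose_neg, conjTranspose_mul, hGiH]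
    have hXG : X * G = -B := by
      rw [hX, Matrix.neg_mul, Matrix.mul_assoc, hGiG, Matrix.mul_one]
    have hGXH : G * Xᴴ = -Bᴴ := by
      rw [hXH, Matrix.mul_neg, ← Matrix.mul_assoc, hGGi, Matrix.one_mul]
    have hXBH : X * Bᴴ = -M := by
      rw [hX, Matrix.neg_mul, hBGB]
    rw [fromBlocks_conjTranspose, fromBlocks_multiply, fromBlocks_multiply]
    rw [conjTranspose_zero, conjTranspose_one, conjTranspose_mul U2 X]
    have e2 : U2 * A2 + U2 * X * Bᴴ = U2 * (A2 - M) := by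
      rw [Matrix.mul_assoc, hXBH, Matrix.mul_sub, Matrix.mul_neg]
      abel
    have e3 : U2 * B + U2 * X * G = 0 := by
      rw [Matrix.mul_assoc, hXG, Matrix.mul_neg]
      abel
    rw [e2, e3]
    simp only [Matrix.zero_mul, Matrix.mul_zero, Matrix.one_mul, Matrix.mul_one, add_zero,
      zero_add, hU2T]
    rw [← Matrix.mul_assoc G, hGXH, Matrix.neg_mul]
    simp
  have hUdet : IsUnit U.det := by
    rw [hU, det_fromBlocks_zero₂₁, det_one, mul_one, hU2, Matrix.det_fin_two_of]
    norm_num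
  -- invertibility of the small diagonal entry
  have hDdet : IsUnit (fromBlocks T 0 0 G).det := by
    rw [← hUHU, det_mul, det_mul, det_conjTranspose]
    exact (hUdet.mul hHinv).mul hUdet.star
  have hTdet : IsUnit T.det := by
    rw [det_fromBlocks_zero₂₁] at hDdet
    exact isUnit_of_mul_isUnit_left hDdet
  have hd1 : 1 / (c : ℂ) - (Complex.normSq a : ℂ) * lam ≠ 0 := by
    intro h0
    rw [hT, Matrix.det_fin_two_of, h0] at hTdet
    simp at hTdet
  -- lam is real
  have hlamr : (starRingEnd ℂ) lam = lam := by
    have hGiH : (G⁻¹)ᴴ = G⁻¹ := by rw [conjTranspose_nonsing_inv, hGherm.eq]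
    have hsv : (fun i => (starRingEnd ℂ) (v i)) = star v := rfl
    rw [hlam, hsv]
    calc (starRingEnd ℂ) (v ⬝ᵥ G⁻¹ *ᵥ star v)
        = star (v ⬝ᵥ G⁻¹ *ᵥ star v) := rfl
      _ = star (G⁻¹ *ᵥ star v) ⬝ᵥ star v := by
          simp only [dotProduct, star_sum, star_mul']
          exact Finset.sum_congr rfl fun i _ => mul_comm _ _
      _ = (star (star v) ᵥ* (G⁻¹)ᴴ) ⬝ᵥ star v := by rw [star_mulVec]
      _ = (v ᵥ* G⁻¹) ⬝ᵥ star v := by rw [star_star, hGiH]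
      _ = v ⬝ᵥ G⁻¹ *ᵥ star v := (dotProduct_mulVec _ _ _).symm
  obtain ⟨lr, hlr⟩ : ∃ lr : ℝ, lam = (lr : ℂ) :=
    ⟨lam.re, (Complex.conj_eq_iff_re.mp hlamr).symm⟩
  have hd1r : 1 / c - Complex.normSq a * lr ≠ 0 := by
    intro h0
    apply hd1
    rw [hlr]
    norm_cast
  refine ⟨?_, ⟨U, hUdet, hUHU⟩, lr, hlr, ?_⟩
  · intro h1
    apply hd1
    rw [sub_eq_zero]
    field_simp
    linear_combination -h1
  · intro hHh hGh
    -- real diagonal data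
    set d : Fin 2 → ℝ := ![1 / c - Complex.normSq a * lr, -(c * Complex.normSq a)] with hd
    have hTd : T = diagonal fun i => (d i : ℂ) := by
      rw [hT]
      ext i j
      fin_cases i <;> fin_cases j <;>
        simp [hd, hlr, Matrix.diagonal_apply] <;> push_cast <;> ring
    have hTnd : -T = diagonal fun i => (((-d) i : ℝ) : ℂ) := by
      rw [hTd]
      ext i j
      rw [Matrix.neg_apply]
      by_cases hij : i = j
      · subst hij; simp
      · simp [Matrix.diagonal_apply_ne _ hij]
    have hMPT : IsMaxPos T ((Finset.univ.filter fun i => 0 < d i).card) := by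
      rw [hTd]; exact isMaxPos_diagonal d
    have hMPnT : IsMaxPos (-T) ((Finset.univ.filter fun i => 0 < (-d) i).card) := by
      rw [hTnd]; exact isMaxPos_diagonal (-d)
    obtain ⟨hMPG, hMPnG⟩ := isMaxPos_eigen G hGh
    have hMPD := hMPT.sum_blocks hMPG
    have hMPnD : IsMaxPos (-(fromBlocks T 0 0 G))
        ((Finset.univ.filter fun i => 0 < (-d) i).card +
          (Finset.univ.filter fun i => hGh.eigenvalues i < 0).card) := by
      rw [fromBlocks_neg, neg_zero, neg_zero]
      exact hMPnT.sum_blocks hMPnG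
    have hUHdet : IsUnit Uᴴ.det := by rw [det_conjTranspose]; exact hUdet.star
    have hUidet : IsUnit U⁻¹.det := isUnit_nonsing_inv_det _ hUdet
    have hHeq : H = U⁻¹ * (fromBlocks T 0 0 G) * (U⁻¹)ᴴ := by
      rw [← hUHU, conjTranspose_nonsing_inv]
      simp only [Matrix.mul_assoc]
      rw [mul_nonsing_inv _ hUHdet, Matrix.mul_one, ← Matrix.mul_assoc,
        nonsing_inv_mul _ hUdet, Matrix.one_mul]
    have hMPH : IsMaxPos H ((Finset.univ.filter fun i => 0 < d i).card +
        (Finset.univ.filter fun i => 0 < hGh.eigenvalues i).card) := by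
      rw [hHeq]; exact hMPD.congruence U⁻¹ hUidet
    have hMPnH : IsMaxPos (-H) ((Finset.univ.filter fun i => 0 < (-d) i).card +
        (Finset.univ.filter fun i => hGh.eigenvalues i < 0).card) := by
      have hnH : -H = U⁻¹ * (-(fromBlocks T 0 0 G)) * (U⁻¹)ᴴ := by
        rw [hHeq, Matrix.mul_neg, Matrix.neg_mul]
      rw [hnH]; exact hMPnD.congruence U⁻¹ hUidet
    obtain ⟨hMPH', hMPnH'⟩ := isMaxPos_eigen H hHh
    have e1 := hMPH'.unique hMPH
    have e2 := hMPnH'.unique hMPnH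
    have hp2 : ((Finset.univ.filter fun i => 0 < d i).card : ℝ) -
        ((Finset.univ.filter fun i => 0 < (-d) i).card : ℝ) =
        Real.sign (1 / c - Complex.normSq a * lr) + Real.sign (-c) := by
      have hcard : ∀ e : Fin 2 → ℝ, ((Finset.univ.filter fun i => 0 < e i).card : ℝ) =
          (if 0 < e 0 then 1 else 0) + (if 0 < e 1 then 1 else 0) := by
        intro e
        rw [Finset.card_filter, Fin.sum_univ_two]
        push_cast
        rfl
      have hd0 : d 0 = 1 / c - Complex.normSq a * lr := rfl
      have hd1' : d 1 = -(c * Complex.normSq a) := rfl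
      rw [hcard, hcard]
      simp only [Pi.neg_apply, hd0, hd1']
      rcases hd1r.lt_or_gt with h0 | h0 <;> rcases hc.lt_or_gt with hcs | hcs
      · rw [if_neg (by linarith), if_pos (by nlinarith), if_pos (by linarith),
          if_neg (by nlinarith), Real.sign_of_neg h0,
          Real.sign_of_pos (by linarith : (0:ℝ) < -c)]
        norm_num
      · rw [if_neg (by linarith), if_neg (by nlinarith), if_pos (by linarith),
          if_pos (by nlinarith), Real.sign_of_neg h0,
          Real.sign_of_neg (by linarith : -c < 0)]
        norm_num
      · rw [if_pos h0, if_pos (by nlinarith), if_neg (by linarith),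
          if_neg (by nlinarith), Real.sign_of_pos h0,
          Real.sign_of_pos (by linarith : (0:ℝ) < -c)]
        norm_num
      · rw [if_pos h0, if_neg (by nlinarith), if_neg (by linarith),
          if_pos (by nlinarith), Real.sign_of_pos h0,
          Real.sign_of_neg (by linarith : -c < 0)]
        norm_num
    unfold hermSig
    rw [e1, e2]
    push_cast
    push_cast at hp2
    linarith [hp2]
end

section
/- Let G be an invertible n×n symmetric matrix over ℚ, v ∈ ℚⁿ, n' ∈ ℤ \ {0}, and ε = ±1. Form the (n+2)×(n+2) symmetric matrix H = [[0, 1, ε v],[1, −2n', 0],[ε vᵀ, 0, G]]. Then H is congruent over ℚ to diag(1/(2n') − λ, −2n', G) where λ = v G⁻¹ vᵀ, provided 1/(2n') − λ ≠ 0; and H is invertible if and only if 2n'λ ≠ 1. In that case sign(H) = sign(G) + sign(1/(2n') − λ) − sign(2n'). -/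
/-!
Clearing the off-diagonal blocks of `H` against the invertible symmetric block `G` (a
Schur-complement congruence) replaces the top-left block by
`!![0, 1; 1, -c] - B G⁻¹ Bᵀ = !![-λ, 1; 1, -c]`, where `c = 2n'`; because `ε² = 1`, the
correction `B G⁻¹ Bᵀ` is `λ` in the corner. A second unimodular congruence diagonalises this
block to `diag(c⁻¹ - λ, -c)`. Hence `H = Mᵀ D M` with `det M = 1` and
`D = diag(c⁻¹ - λ, -c) ⊕ G`, which gives the congruence, `det H = det D = (cλ - 1) det G`,
and, by Sylvester's law of inertia (`QuadraticForm.sigPos` is a congruence invariant), the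
signature formula.
-/

open Matrix

/-- Signature of a rational symmetric matrix, via the eigenvalues of its real
companion. -/
noncomputable def ratSig {m : Type*} [Fintype m] [DecidableEq m]
    (A : Matrix m m ℚ) (hA : (A.map ((↑) : ℚ → ℝ)).IsHermitian) : ℤ :=
  ((Finset.univ.filter fun i => 0 < hA.eigenvalues i).card : ℤ) -
    ((Finset.univ.filter fun i => hA.eigenvalues i < 0).card : ℤ)

namespace Matrix

open QuadraticMap QuadraticForm Finset

variable {m n R : Type*} [Fintype m] [DecidableEq m] [Fintype n] [DecidableEq n]

lemma exists_transpose_mul_mul_eq_of_eq_transpose_mul_mul [CommRing R] {H D M : Matrix m m R}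
    (hM : IsUnit M.det) (h : H = Mᵀ * D * M) :
    ∃ P : Matrix m m R, IsUnit P.det ∧ Pᵀ * H * P = D := by
  refine ⟨M⁻¹, isUnit_nonsing_inv_det M hM, ?_⟩
  have hMT : IsUnit Mᵀ.det := by rwa [det_transpose]
  rw [h, transpose_nonsing_inv, ← Matrix.mul_assoc, ← Matrix.mul_assoc, nonsing_inv_mul _ hMT,
    Matrix.one_mul, Matrix.mul_assoc, mul_nonsing_inv _ hM, Matrix.mul_one]

lemma toQuadraticForm'_transpose_mul_mul [CommRing R] (P A : Matrix m m R) :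
    (Pᵀ * A * P).toQuadraticForm' = A.toQuadraticForm'.comp (toLin' P) := by
  ext x
  simp [toQuadraticForm', toLinearMap₂'_apply', dotProduct_mulVec, vecMul_transpose,
    ← mulVec_mulVec]

lemma toQuadraticForm'_diagonal [CommRing R] (d : m → R) :
    (diagonal d).toQuadraticForm' = weightedSumSquares R d := by
  ext x
  simp only [toQuadraticForm', LinearMap.BilinMap.toQuadraticMap_apply, toLinearMap₂'_apply',
    weightedSumSquares_apply, dotProduct, mulVec_diagonal, smul_eq_mul]
  exact sum_congr rfl fun i _ => by ring

lemma equivalent_toQuadraticForm'_transpose_mul_mul [CommRing R] {P : Matrix m m R}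
    (hP : IsUnit P.det) (A : Matrix m m R) :
    (Pᵀ * A * P).toQuadraticForm'.Equivalent A.toQuadraticForm' := by
  let _ := P.invertibleOfIsUnitDet hP
  rw [toQuadraticForm'_transpose_mul_mul]
  exact ⟨(A.toQuadraticForm'.isometryEquivOfCompLinearEquiv (P.toLinearEquiv' ‹_›)).symm⟩

noncomputable def signature (A : Matrix m m ℝ) : ℤ :=
  sigPos A.toQuadraticForm' - sigNeg A.toQuadraticForm'

lemma signature_transpose_mul_mul {P : Matrix m m ℝ} (hP : IsUnit P.det) (A : Matrix m m ℝ) :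
    (Pᵀ * A * P).signature = A.signature := by
  have h := equivalent_toQuadraticForm'_transpose_mul_mul hP A
  rw [signature, signature, h.sigPos_eq, h.sigNeg_eq]

lemma signature_diagonal (d : m → ℝ) :
    (diagonal d).signature = #{i | 0 < d i} - #{i | d i < 0} := by
  rw [signature, toQuadraticForm'_diagonal, sigPos_weightedSumSquares, sigNeg_weightedSumSquares]
  simp only [← Set.ncard_coe_finset, coe_filter, mem_univ, true_and]

lemma signature_diagonal_eq_sum_sign (d : m → ℝ) :
    ((diagonal d).signature : ℝ) = ∑ i, Real.sign (d i) := by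
  rw [signature_diagonal]
  push_cast
  rw [natCast_card_filter, natCast_card_filter, ← sum_sub_distrib]
  refine sum_congr rfl fun i _ => ?_
  rcases lt_trichotomy (d i) 0 with h | h | h
  · simp [h, h.not_gt, Real.sign_of_neg h]
  · simp [h]
  · simp [h, h.not_gt, Real.sign_of_pos h]

lemma signature_diagonal_sum_elim (d : m → ℝ) (e : n → ℝ) :
    (diagonal (Sum.elim d e)).signature = (diagonal d).signature + (diagonal e).signature := by
  simp only [signature_diagonal, natCast_card_filter, Fintype.sum_sum_type, Sum.elim_inl,
    Sum.elim_inr]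
  grind

lemma IsHermitian.exists_transpose_mul_mul_eq_diagonal {A : Matrix m m ℝ} (hA : A.IsHermitian) :
    ∃ U : Matrix m m ℝ, IsUnit U.det ∧ Uᵀ * A * U = diagonal hA.eigenvalues := by
  refine ⟨hA.eigenvectorUnitary, UnitaryGroup.det_isUnit _, ?_⟩
  simpa [Unitary.conjStarAlgAut_star_apply, star_eq_conjTranspose] using
    hA.conjStarAlgAut_star_eigenvectorUnitary

lemma IsHermitian.signature_eq {A : Matrix m m ℝ} (hA : A.IsHermitian) :
    A.signature = #{i | 0 < hA.eigenvalues i} - #{i | hA.eigenvalues i < 0} := by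
  obtain ⟨U, hU, hUAU⟩ := hA.exists_transpose_mul_mul_eq_diagonal
  rw [← signature_transpose_mul_mul hU, hUAU, signature_diagonal]

lemma signature_fromBlocks_zero {A : Matrix m m ℝ} {B : Matrix n n ℝ} (hA : A.IsHermitian)
    (hB : B.IsHermitian) : (fromBlocks A 0 0 B).signature = A.signature + B.signature := by
  obtain ⟨U, hU, hUAU⟩ := hA.exists_transpose_mul_mul_eq_diagonal
  obtain ⟨V, hV, hVBV⟩ := hB.exists_transpose_mul_mul_eq_diagonal
  have hUV : IsUnit (fromBlocks U 0 0 V).det := by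
    rw [det_fromBlocks_zero₂₁]
    exact hU.mul hV
  have hdiag : (fromBlocks U 0 0 V)ᵀ * fromBlocks A 0 0 B * fromBlocks U 0 0 V =
      diagonal (Sum.elim hA.eigenvalues hB.eigenvalues) := by
    simp [fromBlocks_transpose, fromBlocks_multiply, hUAU, hVBV, ← fromBlocks_diagonal]
  rw [← signature_transpose_mul_mul hUV, hdiag, signature_diagonal_sum_elim,
    ← hUAU, ← hVBV, signature_transpose_mul_mul hU, signature_transpose_mul_mul hV]

end Matrix

-- Stated with `Rat.castHom` rather than the coercion so that `Matrix.map_mul` rewrites apply.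
lemma ratSig_eq_signature {m : Type*} [Fintype m] [DecidableEq m] {A : Matrix m m ℚ}
    (hA : (A.map ((↑) : ℚ → ℝ)).IsHermitian) :
    ratSig A hA = (A.map (Rat.castHom ℝ)).signature :=
  hA.signature_eq.symm

lemma ratSig_eq_sum_sign_add_of_eq_transpose_mul_mul {m n : Type*} [Fintype m] [DecidableEq m]
    [Fintype n] [DecidableEq n] {H M : Matrix (m ⊕ n) (m ⊕ n) ℚ} {G : Matrix n n ℚ} {d : m → ℚ}
    (hM : IsUnit M.det) (h : H = Mᵀ * fromBlocks (diagonal d) 0 0 G * M)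
    (hHh : (H.map ((↑) : ℚ → ℝ)).IsHermitian) (hGh : (G.map ((↑) : ℚ → ℝ)).IsHermitian) :
    (ratSig H hHh : ℝ) = ∑ i, Real.sign (d i : ℝ) + ratSig G hGh := by
  have hMR : IsUnit (M.map (Rat.castHom ℝ)).det := by
    rw [← RingHom.mapMatrix_apply, ← RingHom.map_det]
    exact hM.map _
  rw [ratSig_eq_signature, ratSig_eq_signature, h, Matrix.map_mul, Matrix.map_mul, transpose_map,
    signature_transpose_mul_mul hMR, fromBlocks_map, diagonal_map (map_zero _),
    Matrix.map_zero _ (map_zero _), Matrix.map_zero _ (map_zero _),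
    signature_fromBlocks_zero (B := G.map (Rat.castHom ℝ)) (isHermitian_diagonal _) hGh]
  push_cast
  rw [signature_diagonal_eq_sum_sign]
  rfl

section Goeritz

variable {K : Type*} [Field K] {n : Type*} [Fintype n] [DecidableEq n]

lemma fromBlocks_eq_transpose_mul_schur_mul {m : Type*} [Fintype m] [DecidableEq m]
    {A : Matrix m m K} {B : Matrix m n K} {G : Matrix n n K} (hGsymm : Gᵀ = G)
    (hG : IsUnit G.det) :
    fromBlocks A B Bᵀ G = (fromBlocks 1 0 (G⁻¹ * Bᵀ) 1)ᵀ *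
      fromBlocks (A - B * G⁻¹ * Bᵀ) 0 0 G * fromBlocks 1 0 (G⁻¹ * Bᵀ) 1 := by
  let _ := G.invertibleOfIsUnitDet hG
  have hGinvT : (G⁻¹)ᵀ = G⁻¹ := by rw [transpose_nonsing_inv, hGsymm]
  rw [fromBlocks_eq_of_invertible₂₂ A B Bᵀ G, invOf_eq_nonsing_inv]
  simp [fromBlocks_transpose, transpose_mul, hGinvT]

lemma eq_transpose_mul_diagonal_mul_fin_two {c : K} (hc : c ≠ 0) (l : K) :
    !![-l, 1; 1, -c] = !![1, 0; -c⁻¹, 1]ᵀ * !![c⁻¹ - l, 0; 0, -c] * !![1, 0; -c⁻¹, 1] := by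
  ext i j
  fin_cases i <;> fin_cases j <;> simp [mul_apply, Fin.sum_univ_two, hc]
  ring

omit [DecidableEq n] in
lemma row_mul_mul_row_transpose {R : Type*} [CommRing R] (ε : R) (hε : ε * ε = 1)
    (v : n → R) (N : Matrix n n R) :
    (of fun i j => if i = 0 then ε * v j else 0 : Matrix (Fin 2) n R) * N *
      (of fun i j => if i = 0 then ε * v j else 0 : Matrix (Fin 2) n R)ᵀ =
      !![v ⬝ᵥ (N *ᵥ v), 0; 0, 0] := by
  ext i j
  fin_cases i <;> fin_cases j
  · simp only [Fin.zero_eta, of_apply, cons_val', cons_val_zero, empty_val',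
      cons_val_fin_one, mul_apply, transpose_apply, ↓reduceIte, dotProduct_mulVec]
    simp only [dotProduct, vecMul, Finset.sum_mul]
    refine Finset.sum_congr rfl fun k _ => Finset.sum_congr rfl fun l _ => ?_
    linear_combination (v l * N l k * v k) * hε
  all_goals simp [mul_apply]

lemma goeritz_eq_transpose_mul_mul {G : Matrix n n K} (hGsymm : Gᵀ = G)
    (hG : IsUnit G.det) {B : Matrix (Fin 2) n K} {l : K} (hBGB : B * G⁻¹ * Bᵀ = !![l, 0; 0, 0])
    {c : K} (hc : c ≠ 0) :
    ∃ M, M.det = 1 ∧ fromBlocks !![0, 1; 1, -c] B Bᵀ G =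
      Mᵀ * fromBlocks !![c⁻¹ - l, 0; 0, -c] 0 0 G * M := by
  refine ⟨fromBlocks !![1, 0; -c⁻¹, 1] 0 0 1 * fromBlocks 1 0 (G⁻¹ * Bᵀ) 1, by simp, ?_⟩
  have hschur : !![0, 1; 1, -c] - B * G⁻¹ * Bᵀ = !![-l, 1; 1, -c] := by
    rw [hBGB]
    ext i j
    fin_cases i <;> fin_cases j <;> simp
  rw [fromBlocks_eq_transpose_mul_schur_mul hGsymm hG, hschur,
    eq_transpose_mul_diagonal_mul_fin_two hc l]
  simp [transpose_mul, fromBlocks_transpose, fromBlocks_multiply, Matrix.mul_assoc]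

end Goeritz

/-- The symmetric (Goeritz) congruence computation of Theorem 5.4. -/
theorem stmt10 (n : ℕ) (G : Matrix (Fin n) (Fin n) ℚ)
    (hGsymm : Gᵀ = G) (hGinv : IsUnit G.det)
    (v : Fin n → ℚ) (n' : ℤ) (hn' : n' ≠ 0) (ε : ℚ) (hε : ε = 1 ∨ ε = -1)
    (lam : ℚ) (hlam : lam = v ⬝ᵥ (G⁻¹ *ᵥ v))
    (B : Matrix (Fin 2) (Fin n) ℚ)
    (hB : B = Matrix.of fun i j => if i = 0 then ε * v j else 0)
    (H : Matrix (Fin 2 ⊕ Fin n) (Fin 2 ⊕ Fin n) ℚ)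
    (hH : H = Matrix.fromBlocks !![0, 1; 1, -2 * (n' : ℚ)] B Bᵀ G) :
    (1 / (2 * (n' : ℚ)) - lam ≠ 0 →
      ∃ P : Matrix (Fin 2 ⊕ Fin n) (Fin 2 ⊕ Fin n) ℚ, IsUnit P.det ∧
        Pᵀ * H * P = Matrix.fromBlocks
          !![1 / (2 * (n' : ℚ)) - lam, 0; 0, -2 * (n' : ℚ)] 0 0 G) ∧
    (IsUnit H.det ↔ 2 * (n' : ℚ) * lam ≠ 1) ∧
    (2 * (n' : ℚ) * lam ≠ 1 →
      ∀ (hHh : (H.map ((↑) : ℚ → ℝ)).IsHermitian)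
        (hGh : (G.map ((↑) : ℚ → ℝ)).IsHermitian),
        (ratSig H hHh : ℝ) = (ratSig G hGh : ℝ) +
          Real.sign ((1 / (2 * (n' : ℚ)) - lam : ℚ) : ℝ) -
          Real.sign (2 * (n' : ℝ))) := by
  have hc : 2 * (n' : ℚ) ≠ 0 := mul_ne_zero two_ne_zero (Int.cast_ne_zero.mpr hn')
  have hεε : ε * ε = 1 := by rcases hε with rfl | rfl <;> norm_num
  have hBGB : B * G⁻¹ * Bᵀ = !![lam, 0; 0, 0] := by
    rw [hB, hlam]
    exact row_mul_mul_row_transpose ε hεε v G⁻¹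
  obtain ⟨M, hMdet, hHM⟩ := goeritz_eq_transpose_mul_mul hGsymm hGinv hBGB hc
  rw [← one_div, ← neg_mul, ← hH] at hHM
  refine ⟨fun _ => exists_transpose_mul_mul_eq_of_eq_transpose_mul_mul (by simp [hMdet]) hHM,
    ?_, fun _ hHh hGh => ?_⟩
  · have hdet : H.det = (2 * n' * lam - 1) * G.det := by
      rw [hHM, det_mul, det_mul, det_transpose, hMdet, det_fromBlocks_zero₂₁, det_fin_two_of]
      field_simp
      ring
    rw [hdet, isUnit_iff_ne_zero, mul_ne_zero_iff, sub_ne_zero]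
    simp [hGinv.ne_zero]
  · have hHM' : H = Mᵀ * fromBlocks (diagonal ![1 / (2 * (n' : ℚ)) - lam, -2 * n']) 0 0 G * M := by
      rwa [diagonal_fin_two]
    rw [ratSig_eq_sum_sign_add_of_eq_transpose_mul_mul (by simp [hMdet]) hHM' hHh hGh]
    simp [Fin.sum_univ_two, Real.sign_neg]
    ring
end

section
/- Let M be an n×n integer matrix with det(tM − Mᵀ) ≢ 0, v ∈ ℤⁿ, n' ∈ ℤ, ε = ±1. Form over the field ℚ(t) the (n+2)×(n+2) matrix H(t) = [[0, t, ε t v],[−1, −n'(t−1), 0],[−ε vᵀ, 0, G(t)]] where G(t) = tM − Mᵀ. Then det H(t) = t · (1 − n'(t−1)·λ(t)) · det G(t), where λ(t) = v G(t)⁻¹ vᵀ. -/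
open Matrix

set_option maxHeartbeats 1000000 in
set_option synthInstance.maxHeartbeats 400000 in
/-- The determinant identity proving Theorem 5.1(5):
`det H(t) = t (1 - n'(t-1) λ(t)) det G(t)` for the stabilized matrix `H(t)`. -/
theorem stmt11 (n : ℕ) (M : Matrix (Fin n) (Fin n) ℤ)
    (Mc G : Matrix (Fin n) (Fin n) (RatFunc ℚ))
    (hMc : Mc = M.map (Int.cast : ℤ → RatFunc ℚ))
    (hGdef : G = (RatFunc.X : RatFunc ℚ) • Mc - Mcᵀ)
    (hGdet : G.det ≠ 0)
    (v : Fin n → ℤ) (vc : Fin n → RatFunc ℚ)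
    (hvc : vc = fun i => (v i : RatFunc ℚ))
    (n' : ℤ) (ε : RatFunc ℚ) (hε : ε = 1 ∨ ε = -1)
    (lam : RatFunc ℚ) (hlam : lam = vc ⬝ᵥ (G⁻¹ *ᵥ vc))
    (H : Matrix (Fin 2 ⊕ Fin n) (Fin 2 ⊕ Fin n) (RatFunc ℚ))
    (hH : H = Matrix.fromBlocks
      !![0, (RatFunc.X : RatFunc ℚ); -1, -(n' : RatFunc ℚ) * (RatFunc.X - 1)]
      (Matrix.of fun i j => if i = 0 then ε * RatFunc.X * vc j else 0)
      (Matrix.of fun i j => if j = 0 then -ε * vc i else 0) G) :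
    H.det = RatFunc.X * (1 - (n' : RatFunc ℚ) * (RatFunc.X - 1) * lam) * G.det := by
  haveI : Invertible G := G.invertibleOfIsUnitDet (isUnit_iff_ne_zero.2 hGdet)
  have hε2 : ε * ε = 1 := by rcases hε with h | h <;> simp [h]
  subst hH
  rw [Matrix.det_fromBlocks₂₂, invOf_eq_nonsing_inv]
  have hBC : (Matrix.of fun i j => if i = 0 then ε * RatFunc.X * vc j else 0) * G⁻¹ *
      (Matrix.of fun i j => if j = 0 then -ε * vc i else 0)
      = !![-(RatFunc.X * lam), 0; 0, 0] := by
    ext i j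
    simp only [Matrix.mul_apply, Matrix.of_apply]
    fin_cases i <;> fin_cases j <;>
      simp [hlam, dotProduct, Matrix.mulVec, Finset.mul_sum, Finset.sum_mul,
        mul_comm, mul_assoc, mul_left_comm]
    rw [Finset.sum_comm]
    refine Finset.sum_congr rfl fun k _ => Finset.sum_congr rfl fun l _ => ?_
    rw [← mul_assoc, hε2, one_mul]
    ring
  rw [hBC]
  have : !![(0:RatFunc ℚ), RatFunc.X; -1, -(n' : RatFunc ℚ) * (RatFunc.X - 1)] -
      !![-(RatFunc.X * lam), 0; 0, 0]
      = !![RatFunc.X * lam, RatFunc.X; -1, -(n' : RatFunc ℚ) * (RatFunc.X - 1)] := by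
    ext i j; fin_cases i <;> fin_cases j <;> simp
  rw [this, Matrix.det_fin_two_of]
  ring
end

section
/- Any symmetric integer matrix A is congruent over ℤ (A ↦ PᵀAP with P ∈ GLₙ(ℤ)) to a block sum B ⊕ O of a nonsingular symmetric integer matrix B and a zero matrix O. -/
open Matrix
open LinearMap (BilinForm)

/-! The radical of the symmetric form `(x, y) ↦ xᵀ A y` is the kernel of a map into a
torsion-free module, hence saturated, so a Smith normal form basis of `ℤⁿ` adapted to it ends with
a basis of the radical. In such a basis the Gram matrix is `B ⊕ 0`, and `B` is nonsingular: a
kernel vector of `B` gives a combination of the first basis vectors lying in the radical, and the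
radical meets their span only in `0`. -/

theorem Function.Embedding.exists_fin_sum_equiv {α β : Type*} [Fintype β] (f : α ↪ β) :
    ∃ (k : ℕ) (e : Fin k ⊕ α ≃ β), ∀ a, e (Sum.inr a) = f a := by
  classical
  exact ⟨_, ((Fintype.equivFin _).symm.sumCongr (Equiv.ofInjective f f.injective)).trans
    ((Equiv.sumComm _ _).trans (Equiv.sumCompl (· ∈ Set.range f))), fun _ => rfl⟩

theorem LinearMap.exists_basis_sum_ker {R M M' ι : Type*} [CommRing R] [IsDomain R]
    [IsPrincipalIdealRing R] [AddCommGroup M] [Module R M] [AddCommGroup M'] [Module R M']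
    [Module.IsTorsionFree R M'] [Fintype ι] (b₀ : Module.Basis ι R M) (f : M →ₗ[R] M') :
    ∃ (k l : ℕ) (b : Module.Basis (Fin k ⊕ Fin l) R M),
      (∀ j, f (b (Sum.inr j)) = 0) ∧ ∀ x, f x = 0 → ∀ i, b.repr x (Sum.inl i) = 0 := by
  obtain ⟨l, snf⟩ := (LinearMap.ker f).smithNormalForm b₀
  obtain ⟨k, e, he⟩ := snf.f.exists_fin_sum_equiv
  refine ⟨k, l, snf.bM.reindex e.symm, fun j => ?_, fun x hx i => ?_⟩
  · have ha : snf.a j ≠ 0 := fun ha => snf.bN.ne_zero j <| Subtype.ext <| by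
      rw [snf.snf, ha, zero_smul, Submodule.coe_zero]
    have hker : snf.a j • f (snf.bM (snf.f j)) = 0 := by
      rw [← map_smul, ← snf.snf]
      exact (snf.bN j).2
    simpa [he, ha] using hker
  · rw [Module.Basis.repr_reindex_apply, Equiv.symm_symm]
    refine snf.repr_eq_zero_of_notMem_range ⟨x, hx⟩ ?_
    rintro ⟨j, hj⟩
    exact Sum.inr_ne_inl (e.injective ((he j).trans hj))

namespace LinearMap.BilinForm

variable {R M ι κ : Type*} [CommRing R] [AddCommGroup M] [Module R M]

theorem toMatrix_reindex {ι' : Type*} [Fintype ι] [DecidableEq ι] [Fintype ι'] [DecidableEq ι']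
    (b : Module.Basis ι R M) (e : ι ≃ ι') (F : BilinForm R M) :
    toMatrix (b.reindex e) F = reindex e e (toMatrix b F) := by
  ext i j
  simp

variable [Fintype ι] [Fintype κ] [DecidableEq ι] [DecidableEq κ] {F : BilinForm R M}
  (b : Module.Basis (ι ⊕ κ) R M)

theorem toMatrix_eq_fromBlocks (hF : F.IsSymm) (hinr : ∀ j, F.flip (b (Sum.inr j)) = 0) :
    toMatrix b F = fromBlocks (toMatrix b F).toBlocks₁₁ 0 0 0 := by
  conv_lhs => rw [← fromBlocks_toBlocks (toMatrix b F)]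
  congr 1 <;> ext i j
  · simpa [toBlocks₁₂] using congr($(hinr j) (b (Sum.inl i)))
  · simpa [toBlocks₂₁, hF.eq (b (Sum.inr i))] using congr($(hinr i) (b (Sum.inl j)))
  · simpa [toBlocks₂₂] using congr($(hinr j) (b (Sum.inr i)))

theorem det_toBlocks₁₁_toMatrix_ne_zero [IsDomain R] (hF : F.IsSymm)
    (hinr : ∀ j, F.flip (b (Sum.inr j)) = 0)
    (hrad : ∀ y, F.flip y = 0 → ∀ i, b.repr y (Sum.inl i) = 0) :
    (toMatrix b F).toBlocks₁₁.det ≠ 0 := by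
  intro hdet
  obtain ⟨v, hv, hBv⟩ := exists_mulVec_eq_zero_iff.mpr hdet
  set y := b.equivFun.symm (Sum.elim v 0)
  have hy : ⇑(b.repr y) = Sum.elim v 0 := by
    funext m
    rw [← b.equivFun_apply, LinearEquiv.apply_symm_apply]
  have hrad_y : F.flip y = 0 := by
    ext x
    rw [flip_apply, apply_eq_dotProduct_toMatrix_mulVec b, hy, toMatrix_eq_fromBlocks b hF hinr,
      fromBlocks_mulVec]
    simp [hBv]
  exact hv (funext fun i => by simpa [hy] using hrad y hrad_y i)

end LinearMap.BilinForm

/-- Kyle's theorem: any symmetric integer matrix is congruent over `ℤ` to the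
block sum of a nonsingular symmetric integer matrix and a zero matrix. -/
theorem stmt13 (n : ℕ) (A : Matrix (Fin n) (Fin n) ℤ) (hA : Aᵀ = A) :
    ∃ (k l : ℕ) (e : (Fin k ⊕ Fin l) ≃ Fin n)
      (B : Matrix (Fin k) (Fin k) ℤ) (P : Matrix (Fin n) (Fin n) ℤ),
        IsUnit P.det ∧ Bᵀ = B ∧ B.det ≠ 0 ∧
        Pᵀ * A * P =
          (Matrix.reindex e e) (Matrix.fromBlocks B 0 0 (0 : Matrix (Fin l) (Fin l) ℤ)) := by
  set F := Matrix.toBilin' A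
  have hF : F.IsSymm := isSymm_toBilin'_iff_isSymm.mpr hA
  obtain ⟨k, l, b, hinr, hrad⟩ := F.flip.exists_basis_sum_ker (Pi.basisFun ℤ (Fin n))
  have hG := LinearMap.BilinForm.toMatrix_eq_fromBlocks b hF hinr
  set B := (LinearMap.BilinForm.toMatrix b F).toBlocks₁₁
  let e := b.indexEquiv (Pi.basisFun ℤ (Fin n))
  set P := (Pi.basisFun ℤ (Fin n)).toMatrix (b.reindex e)
  refine ⟨k, l, e, B, P, ?_, ?_,
    LinearMap.BilinForm.det_toBlocks₁₁_toMatrix_ne_zero b hF hinr hrad, ?_⟩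
  · have := (Pi.basisFun ℤ (Fin n)).invertibleToMatrix (b.reindex e)
    exact isUnit_det_of_invertible P
  · have hsymm := (LinearMap.BilinForm.isSymm_toMatrix_iff_isSymm b).mpr hF
    rw [hG] at hsymm
    exact (isSymm_fromBlocks_iff.mp hsymm).1
  · rw [← hG, ← LinearMap.BilinForm.toMatrix_reindex,
      ← LinearMap.BilinForm.toMatrix_mul_basis_toMatrix (Pi.basisFun ℤ (Fin n)),
      LinearMap.BilinForm.toMatrix_basisFun, LinearMap.BilinForm.toMatrix'_toBilin']
end

section
/- Let M be an n×n integer matrix, p ≥ 2, and let M_p be the (p−1)n × (p−1)n block tridiagonal matrix with diagonal blocks M + Mᵀ, superdiagonal blocks −Mᵀ, and subdiagonal blocks −M. Let ω be a primitive p-th root of unity. Then M_p is nonsingular over ℚ if and only if det(ω^k M − Mᵀ) ≠ 0 for every p-th root of unity ω^k ≠ 1 (k = 1, …, p−1). -/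
open Matrix Finset

private lemma auxA (q m : ℕ) (g : ℕ → ℂ) :
    (∑ k : Fin q, if (k : ℕ) = m then g k else 0) = if m < q then g m else 0 := by
  rw [Fin.sum_univ_eq_sum_range (fun i => if i = m then g i else 0)]
  simp [Finset.sum_ite_eq' (Finset.range q) m g, Finset.mem_range]

private lemma auxB (q m : ℕ) (g : ℕ → ℂ) :
    (∑ k : Fin q, if m = (k : ℕ) + 1 then g k else 0)
      = if 1 ≤ m ∧ m - 1 < q then g (m - 1) else 0 := by
  cases m with
  | zero => simp
  | succ m' =>
    have h : ∀ k : Fin q, (if m' + 1 = (k:ℕ) + 1 then g k else 0)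
        = (if (k:ℕ) = m' then g k else 0) := by
      intro k; by_cases h : (k:ℕ) = m' <;> simp [h] <;> omega
    rw [Finset.sum_congr rfl (fun k _ => h k), auxA q m' g]
    simp

private lemma auxD {q : ℕ} (m : ℕ) (hm : m < q) (g : Fin q → ℂ) :
    (∑ k : Fin q, if (k : ℕ) = m then g k else 0) = g ⟨m, hm⟩ := by
  rw [Finset.sum_eq_single_of_mem (⟨m, hm⟩ : Fin q) (Finset.mem_univ _)]
  · simp
  · intro b _ hb
    rw [if_neg (by simpa [Fin.ext_iff] using hb)]


set_option maxHeartbeats 2000000 in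
private theorem key14 (n q : ℕ) (hq : 1 ≤ q) (N : Matrix (Fin n) (Fin n) ℂ)
    (B : Matrix (Fin q × Fin n) (Fin q × Fin n) ℂ)
    (hB : B = Matrix.of fun ki lj =>
      if ki.1 = lj.1 then (N + Nᵀ) ki.2 lj.2
      else if (lj.1 : ℕ) = (ki.1 : ℕ) + 1 then (-Nᵀ) ki.2 lj.2
      else if (ki.1 : ℕ) = (lj.1 : ℕ) + 1 then (-N) ki.2 lj.2
      else 0) :
    B.det ≠ 0 ↔ ∀ ω : ℂ, ω ^ (q + 1) = 1 → ω ≠ 1 → (ω • N - Nᵀ).det ≠ 0 := by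
  have hbe : ∀ (k l : Fin q) (i j : Fin n), B (k, i) (l, j)
      = (if (l : ℕ) = (k : ℕ) then (N + Nᵀ) i j else 0)
        - (if (l : ℕ) = (k : ℕ) + 1 then Nᵀ i j else 0)
        - (if (k : ℕ) = (l : ℕ) + 1 then N i j else 0) := by
    intro k l i j
    rw [hB]
    simp only [Matrix.of_apply, Matrix.neg_apply]
    by_cases h1 : k = l
    · rw [if_pos h1, if_pos (by simp [h1]), if_neg (by omega),
        if_neg (by subst h1; omega)]
      ring
    · rw [if_neg h1]
      have h1' : (l : ℕ) ≠ (k : ℕ) := fun h => h1 (Fin.ext h.symm)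
      rw [if_neg h1']
      by_cases h2 : (l : ℕ) = (k : ℕ) + 1
      · simp only [if_pos h2, if_neg (show ¬(k : ℕ) = (l : ℕ) + 1 from by omega)]; ring
      · rw [if_neg h2, if_neg h2]
        by_cases h3 : (k : ℕ) = (l : ℕ) + 1
        · rw [if_pos h3, if_pos h3]; ring
        · rw [if_neg h3, if_neg h3]; ring
  have hrow : ∀ (v : Fin q × Fin n → ℂ) (k : Fin q) (i : Fin n),
      (B *ᵥ v) (k, i) = ∑ l : Fin q, ∑ j : Fin n,
        ((if (l : ℕ) = (k : ℕ) then (N + Nᵀ) i j else 0)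
          - (if (l : ℕ) = (k : ℕ) + 1 then Nᵀ i j else 0)
          - (if (k : ℕ) = (l : ℕ) + 1 then N i j else 0)) * v (l, j) := by
    intro v k i
    rw [Matrix.mulVec, dotProduct, Fintype.sum_prod_type]
    exact Finset.sum_congr rfl fun l _ => Finset.sum_congr rfl fun j _ => by
      rw [hbe]
  constructor
  · -- nonsingular ⇒ each block nonsingular
    intro hdet ω hωp hω1
    intro h0
    apply hdet
    rw [← Matrix.exists_mulVec_eq_zero_iff]
    obtain ⟨w, hw0, hww⟩ := Matrix.exists_mulVec_eq_zero_iff.mpr h0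
    have hω0 : ω ≠ 0 := by
      intro h; rw [h, zero_pow (by omega)] at hωp; exact zero_ne_one hωp
    set u : ℂ := ω⁻¹ with hudef
    have hu : ω * u = 1 := mul_inv_cancel₀ hω0
    have hup : u ^ (q + 1) = 1 := by rw [hudef, inv_pow, hωp, inv_one]
    have hu1 : u ≠ 1 := by
      intro h; apply hω1; rw [hudef, inv_eq_one] at h; exact h
    have hrel : ω • (N *ᵥ w) = Nᵀ *ᵥ w := by
      have := hww
      rw [Matrix.sub_mulVec, Matrix.smul_mulVec, sub_eq_zero] at this
      exact this
    refine ⟨fun lj => (u ^ ((lj.1 : ℕ) + 1) - 1) * w lj.2, ?_, ?_⟩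
    · -- nonzero
      obtain ⟨i, hi⟩ := Function.ne_iff.mp hw0
      intro hv
      have := congrFun hv (⟨0, by omega⟩, i)
      simp only [Pi.zero_apply] at this
      have h1 : u ^ (0 + 1) - 1 ≠ 0 := by
        simpa [sub_eq_zero] using hu1
      exact hi (by
        rcases mul_eq_zero.mp this with h | h
        · exact absurd h (by simpa [sub_eq_zero] using hu1)
        · exact h)
    · -- B *ᵥ v = 0
      funext x
      obtain ⟨k, i⟩ := x
      rw [hrow]
      simp only [Pi.zero_apply]
      rw [Finset.sum_comm]
      have hpt : ∀ (C : Matrix (Fin n) (Fin n) ℂ) (c : ℂ),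
          (∑ j : Fin n, C i j * (c * w j)) = c * (C *ᵥ w) i := by
        intro C c
        rw [Matrix.mulVec, dotProduct, Finset.mul_sum]
        exact Finset.sum_congr rfl fun j _ => by ring
      have inner : ∀ j : Fin n,
          (∑ l : Fin q,
            ((if (l : ℕ) = (k : ℕ) then (N + Nᵀ) i j else 0)
              - (if (l : ℕ) = (k : ℕ) + 1 then Nᵀ i j else 0)
              - (if (k : ℕ) = (l : ℕ) + 1 then N i j else 0))
              * ((u ^ ((l : ℕ) + 1) - 1) * w j))
          = (N + Nᵀ) i j * ((u ^ ((k : ℕ) + 1) - 1) * w j)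
            - Nᵀ i j * ((u ^ ((k : ℕ) + 1 + 1) - 1) * w j)
            - N i j * ((u ^ (k : ℕ) - 1) * w j) := by
        intro j
        have h1 : (∑ l : Fin q, if (l : ℕ) = (k : ℕ)
              then (N + Nᵀ) i j * ((u ^ ((l : ℕ) + 1) - 1) * w j) else 0)
            = (N + Nᵀ) i j * ((u ^ ((k : ℕ) + 1) - 1) * w j) := by
          rw [auxA q (k : ℕ) (fun m => (N + Nᵀ) i j * ((u ^ (m + 1) - 1) * w j))]
          rw [if_pos k.isLt]
        have h2 : (∑ l : Fin q, if (l : ℕ) = (k : ℕ) + 1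
              then Nᵀ i j * ((u ^ ((l : ℕ) + 1) - 1) * w j) else 0)
            = Nᵀ i j * ((u ^ ((k : ℕ) + 1 + 1) - 1) * w j) := by
          rw [auxA q ((k : ℕ) + 1) (fun m => Nᵀ i j * ((u ^ (m + 1) - 1) * w j))]
          by_cases hkq : (k : ℕ) + 1 < q
          · rw [if_pos hkq]
          · rw [if_neg hkq]
            have hke : (k : ℕ) + 1 + 1 = q + 1 := by
              have := k.isLt; omega
            rw [hke, hup]; ring
        have h3 : (∑ l : Fin q, if (k : ℕ) = (l : ℕ) + 1
              then N i j * ((u ^ ((l : ℕ) + 1) - 1) * w j) else 0)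
            = N i j * ((u ^ (k : ℕ) - 1) * w j) := by
          rw [auxB q (k : ℕ) (fun m => N i j * ((u ^ (m + 1) - 1) * w j))]
          by_cases hk1 : 1 ≤ (k : ℕ)
          · rw [if_pos ⟨hk1, by have := k.isLt; omega⟩]
            have : (k : ℕ) - 1 + 1 = (k : ℕ) := by omega
            rw [this]
          · rw [if_neg (by omega)]
            have : (k : ℕ) = 0 := by omega
            rw [this, pow_zero]; ring
        calc (∑ l : Fin q,
            ((if (l : ℕ) = (k : ℕ) then (N + Nᵀ) i j else 0)
              - (if (l : ℕ) = (k : ℕ) + 1 then Nᵀ i j else 0)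
              - (if (k : ℕ) = (l : ℕ) + 1 then N i j else 0))
              * ((u ^ ((l : ℕ) + 1) - 1) * w j))
            = ∑ l : Fin q,
              ((if (l : ℕ) = (k : ℕ)
                  then (N + Nᵀ) i j * ((u ^ ((l : ℕ) + 1) - 1) * w j) else 0)
                - (if (l : ℕ) = (k : ℕ) + 1
                  then Nᵀ i j * ((u ^ ((l : ℕ) + 1) - 1) * w j) else 0)
                - (if (k : ℕ) = (l : ℕ) + 1
                  then N i j * ((u ^ ((l : ℕ) + 1) - 1) * w j) else 0)) := by
              refine Finset.sum_congr rfl fun l _ => ?_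
              simp only [sub_mul, ite_mul, zero_mul]
          _ = _ := by
              rw [Finset.sum_sub_distrib, Finset.sum_sub_distrib, h1, h2, h3]
      rw [Finset.sum_congr rfl fun j _ => inner j]
      rw [Finset.sum_sub_distrib, Finset.sum_sub_distrib, hpt, hpt, hpt,
        Matrix.add_mulVec]
      have hreli : (Nᵀ *ᵥ w) i = ω * (N *ᵥ w) i := by
        rw [← hrel]; simp
      simp only [Pi.add_apply, hreli]
      set m := (N *ᵥ w) i
      rw [pow_succ, pow_succ]
      linear_combination ((1 - u) * u ^ (k : ℕ) * m) * hu
  · -- each block nonsingular ⇒ nonsingular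
    intro H
    intro hd
    obtain ⟨v, hv0, hv⟩ := Matrix.exists_mulVec_eq_zero_iff.mpr hd
    have master : ∀ (μ : ℂ), μ ^ (q + 1) = 1 → ∀ (i : Fin n),
        (N *ᵥ (fun j => ∑ l : Fin q, μ ^ ((l : ℕ) + 1) * v (l, j))) i
        + (Nᵀ *ᵥ (fun j => ∑ l : Fin q, μ ^ ((l : ℕ) + 1) * v (l, j))) i
        - (Nᵀ *ᵥ (fun j => ∑ l : Fin q, μ ^ (l : ℕ) * v (l, j))) i
        - (N *ᵥ (fun j => ∑ l : Fin q, μ ^ ((l : ℕ) + 2) * v (l, j))) i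
        + (Nᵀ *ᵥ (fun j => v (⟨0, by omega⟩, j))) i
        + (N *ᵥ (fun j => v (⟨q - 1, by omega⟩, j))) i = 0 := by
      intro μ hμ i
      -- the weighted sum of the rows vanishes
      have E0 : (∑ k : Fin q, μ ^ ((k : ℕ) + 1) * (B *ᵥ v) (k, i)) = 0 := by
        simp [hv]
      -- rewrite rows
      have E1 : (∑ k : Fin q, μ ^ ((k : ℕ) + 1) * (B *ᵥ v) (k, i))
          = ∑ l : Fin q, ∑ j : Fin n, ∑ k : Fin q, μ ^ ((k : ℕ) + 1) *
            (((if (l : ℕ) = (k : ℕ) then (N + Nᵀ) i j else 0)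
              - (if (l : ℕ) = (k : ℕ) + 1 then Nᵀ i j else 0)
              - (if (k : ℕ) = (l : ℕ) + 1 then N i j else 0)) * v (l, j)) := by
        have step : ∀ k : Fin q, μ ^ ((k : ℕ) + 1) * (B *ᵥ v) (k, i)
            = ∑ l : Fin q, ∑ j : Fin n, μ ^ ((k : ℕ) + 1) *
              (((if (l : ℕ) = (k : ℕ) then (N + Nᵀ) i j else 0)
                - (if (l : ℕ) = (k : ℕ) + 1 then Nᵀ i j else 0)
                - (if (k : ℕ) = (l : ℕ) + 1 then N i j else 0)) * v (l, j)) := by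
          intro k
          rw [hrow v k i, Finset.mul_sum]
          exact Finset.sum_congr rfl fun l _ => Finset.mul_sum _ _ _
        rw [Finset.sum_congr rfl fun k _ => step k, Finset.sum_comm]
        exact Finset.sum_congr rfl fun l _ => Finset.sum_comm
      -- evaluate the inner k-sum
      have hK : ∀ (l : Fin q) (j : Fin n),
          (∑ k : Fin q, μ ^ ((k : ℕ) + 1) *
            (((if (l : ℕ) = (k : ℕ) then (N + Nᵀ) i j else 0)
              - (if (l : ℕ) = (k : ℕ) + 1 then Nᵀ i j else 0)
              - (if (k : ℕ) = (l : ℕ) + 1 then N i j else 0)) * v (l, j)))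
          = μ ^ ((l : ℕ) + 1) * ((N + Nᵀ) i j * v (l, j))
            - (μ ^ (l : ℕ) * (Nᵀ i j * v (l, j))
                - (if (l : ℕ) = 0 then Nᵀ i j * v (l, j) else 0))
            - (μ ^ ((l : ℕ) + 1 + 1) * (N i j * v (l, j))
                - (if (l : ℕ) = q - 1 then N i j * v (l, j) else 0)) := by
        intro l j
        have step1 : ∀ k : Fin q, μ ^ ((k : ℕ) + 1) *
            (((if (l : ℕ) = (k : ℕ) then (N + Nᵀ) i j else 0)
              - (if (l : ℕ) = (k : ℕ) + 1 then Nᵀ i j else 0)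
              - (if (k : ℕ) = (l : ℕ) + 1 then N i j else 0)) * v (l, j))
            = (if (k : ℕ) = (l : ℕ) then μ ^ ((k : ℕ) + 1) * ((N + Nᵀ) i j * v (l, j)) else 0)
              - (if (l : ℕ) = (k : ℕ) + 1 then μ ^ ((k : ℕ) + 1) * (Nᵀ i j * v (l, j)) else 0)
              - (if (k : ℕ) = (l : ℕ) + 1 then μ ^ ((k : ℕ) + 1) * (N i j * v (l, j)) else 0) := by
          intro k
          by_cases h1 : (l : ℕ) = (k : ℕ)
          · have h1' : (k : ℕ) = (l : ℕ) := h1.symm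
            have n2 : ¬(l : ℕ) = (k : ℕ) + 1 := by omega
            have n3 : ¬(k : ℕ) = (l : ℕ) + 1 := by omega
            rw [if_pos h1, if_pos h1', if_neg n2, if_neg n2, if_neg n3, if_neg n3]
            ring
          · have h1' : ¬(k : ℕ) = (l : ℕ) := fun h => h1 h.symm
            rw [if_neg h1, if_neg h1']
            by_cases h2 : (l : ℕ) = (k : ℕ) + 1
            · have n3 : ¬(k : ℕ) = (l : ℕ) + 1 := by omega
              rw [if_pos h2, if_pos h2, if_neg n3, if_neg n3]
              ring
            · rw [if_neg h2, if_neg h2]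
              by_cases h3 : (k : ℕ) = (l : ℕ) + 1
              · rw [if_pos h3, if_pos h3]; ring
              · rw [if_neg h3, if_neg h3]; ring
        rw [Finset.sum_congr rfl fun k _ => step1 k]
        rw [Finset.sum_sub_distrib, Finset.sum_sub_distrib]
        rw [auxA q ((l : ℕ) + 1) (fun m => μ ^ (m + 1) * (N i j * v (l, j)))]
        rw [auxB q (l : ℕ) (fun m => μ ^ (m + 1) * (Nᵀ i j * v (l, j)))]
        rw [show (∑ k : Fin q, if (k : ℕ) = (l : ℕ)
              then μ ^ ((k : ℕ) + 1) * ((N + Nᵀ) i j * v (l, j)) else 0)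
            = μ ^ ((l : ℕ) + 1) * ((N + Nᵀ) i j * v (l, j)) by
          rw [auxA q (l : ℕ) (fun m => μ ^ (m + 1) * ((N + Nᵀ) i j * v (l, j))),
            if_pos l.isLt]]
        congr 1
        · congr 1
          by_cases hl0 : (l : ℕ) = 0
          · rw [if_neg (by omega), if_pos hl0, hl0, pow_zero]
            ring
          · rw [if_pos ⟨by omega, by have := l.isLt; omega⟩, if_neg hl0,
              show (l : ℕ) - 1 + 1 = (l : ℕ) from by omega]
            ring
        · by_cases hlq : (l : ℕ) + 1 < q
          · rw [if_pos hlq, if_neg (by omega)]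
            ring
          · have hle : (l : ℕ) = q - 1 := by have := l.isLt; omega
            rw [if_neg hlq, if_pos hle,
              show (l : ℕ) + 1 + 1 = q + 1 from by have := l.isLt; omega, hμ]
            ring
      -- convert mulVec expressions to double sums
      have hMVS : ∀ (C : Matrix (Fin n) (Fin n) ℂ) (t : ℕ),
          (C *ᵥ (fun j => ∑ l : Fin q, μ ^ ((l : ℕ) + t) * v (l, j))) i
            = ∑ l : Fin q, ∑ j : Fin n, μ ^ ((l : ℕ) + t) * (C i j * v (l, j)) := by
        intro C t
        calc (C *ᵥ (fun j => ∑ l : Fin q, μ ^ ((l : ℕ) + t) * v (l, j))) i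
            = ∑ j : Fin n, C i j * (∑ l : Fin q, μ ^ ((l : ℕ) + t) * v (l, j)) := rfl
          _ = ∑ j : Fin n, ∑ l : Fin q, μ ^ ((l : ℕ) + t) * (C i j * v (l, j)) :=
              Finset.sum_congr rfl fun j _ => by
                rw [Finset.mul_sum]
                exact Finset.sum_congr rfl fun l _ => by ring
          _ = ∑ l : Fin q, ∑ j : Fin n, μ ^ ((l : ℕ) + t) * (C i j * v (l, j)) :=
              Finset.sum_comm
      have h1 := hMVS N 1
      have h1' := hMVS Nᵀ 1
      have h0' := hMVS Nᵀ 0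
      have h2 := hMVS N 2
      simp only [Nat.add_zero] at h0'
      have hΔ0 : (∑ l : Fin q, ∑ j : Fin n,
            if (l : ℕ) = 0 then Nᵀ i j * v (l, j) else 0)
          = (Nᵀ *ᵥ (fun j => v (⟨0, by omega⟩, j))) i := by
        rw [Finset.sum_comm]
        exact Finset.sum_congr rfl fun j _ =>
          auxD 0 (by omega) (fun l => Nᵀ i j * v (l, j))
      have hΔq : (∑ l : Fin q, ∑ j : Fin n,
            if (l : ℕ) = q - 1 then N i j * v (l, j) else 0)
          = (N *ᵥ (fun j => v (⟨q - 1, by omega⟩, j))) i := by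
        rw [Finset.sum_comm]
        exact Finset.sum_congr rfl fun j _ =>
          auxD (q - 1) (by omega) (fun l => N i j * v (l, j))
      -- expand the double sum of hK values
      have hexp : (∑ l : Fin q, ∑ j : Fin n,
            (μ ^ ((l : ℕ) + 1) * ((N + Nᵀ) i j * v (l, j))
              - (μ ^ (l : ℕ) * (Nᵀ i j * v (l, j))
                  - (if (l : ℕ) = 0 then Nᵀ i j * v (l, j) else 0))
              - (μ ^ ((l : ℕ) + 1 + 1) * (N i j * v (l, j))
                  - (if (l : ℕ) = q - 1 then N i j * v (l, j) else 0))))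
          = (∑ l : Fin q, ∑ j : Fin n, μ ^ ((l : ℕ) + 1) * (N i j * v (l, j)))
            + (∑ l : Fin q, ∑ j : Fin n, μ ^ ((l : ℕ) + 1) * (Nᵀ i j * v (l, j)))
            - (∑ l : Fin q, ∑ j : Fin n, μ ^ (l : ℕ) * (Nᵀ i j * v (l, j)))
            - (∑ l : Fin q, ∑ j : Fin n, μ ^ ((l : ℕ) + 2) * (N i j * v (l, j)))
            + ((∑ l : Fin q, ∑ j : Fin n,
                if (l : ℕ) = 0 then Nᵀ i j * v (l, j) else 0)
              + (∑ l : Fin q, ∑ j : Fin n,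
                if (l : ℕ) = q - 1 then N i j * v (l, j) else 0)) := by
        have pointwise : ∀ (l : Fin q) (j : Fin n),
            (μ ^ ((l : ℕ) + 1) * ((N + Nᵀ) i j * v (l, j))
              - (μ ^ (l : ℕ) * (Nᵀ i j * v (l, j))
                  - (if (l : ℕ) = 0 then Nᵀ i j * v (l, j) else 0))
              - (μ ^ ((l : ℕ) + 1 + 1) * (N i j * v (l, j))
                  - (if (l : ℕ) = q - 1 then N i j * v (l, j) else 0)))
            = (μ ^ ((l : ℕ) + 1) * (N i j * v (l, j))
                + μ ^ ((l : ℕ) + 1) * (Nᵀ i j * v (l, j)))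
              - μ ^ (l : ℕ) * (Nᵀ i j * v (l, j))
              - μ ^ ((l : ℕ) + 2) * (N i j * v (l, j))
              + ((if (l : ℕ) = 0 then Nᵀ i j * v (l, j) else 0)
                + (if (l : ℕ) = q - 1 then N i j * v (l, j) else 0)) := by
          intro l j
          rw [Matrix.add_apply]
          ring
        rw [Finset.sum_congr rfl fun l _ => Finset.sum_congr rfl fun j _ =>
          pointwise l j]
        simp only [Finset.sum_add_distrib, Finset.sum_sub_distrib]
      rw [h1, h1', h0', h2, ← hΔ0, ← hΔq]
      rw [show ∀ a b c d e f : ℂ, a + b - c - d + e + f = a + b - c - d + (e + f)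
        from fun a b c d e f => by ring]
      rw [← hexp]
      rw [← Finset.sum_congr rfl fun l (_ : l ∈ Finset.univ) =>
        Finset.sum_congr rfl fun j (_ : j ∈ Finset.univ) => hK l j]
      rw [← E1]
      exact E0

    -- μ = 1 gives the boundary relation
    have hr : ∀ i : Fin n,
        (Nᵀ *ᵥ (fun j => v (⟨0, by omega⟩, j))) i
          + (N *ᵥ (fun j => v (⟨q - 1, by omega⟩, j))) i = 0 := by
      intro i
      have h := master 1 (one_pow _) i
      simp only [one_pow, one_mul] at h
      linear_combination h
    -- scaling relation for the twisted sums
    have hMVS2 : ∀ (C : Matrix (Fin n) (Fin n) ℂ) (μ : ℂ) (t : ℕ) (i : Fin n),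
        (C *ᵥ (fun j => ∑ l : Fin q, μ ^ ((l : ℕ) + t) * v (l, j))) i
          = μ ^ t * (C *ᵥ (fun j => ∑ l : Fin q, μ ^ (l : ℕ) * v (l, j))) i := by
      intro C μ t i
      calc (C *ᵥ (fun j => ∑ l : Fin q, μ ^ ((l : ℕ) + t) * v (l, j))) i
          = ∑ j : Fin n, C i j * (∑ l : Fin q, μ ^ ((l : ℕ) + t) * v (l, j)) := rfl
        _ = ∑ j : Fin n, μ ^ t * (C i j * (∑ l : Fin q, μ ^ (l : ℕ) * v (l, j))) := by
            refine Finset.sum_congr rfl fun j _ => ?_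
            rw [Finset.mul_sum, Finset.mul_sum, Finset.mul_sum]
            refine Finset.sum_congr rfl fun l _ => ?_
            rw [pow_add]
            ring
        _ = μ ^ t * ∑ j : Fin n, C i j * (∑ l : Fin q, μ ^ (l : ℕ) * v (l, j)) := by
            rw [Finset.mul_sum]
        _ = μ ^ t * (C *ᵥ (fun j => ∑ l : Fin q, μ ^ (l : ℕ) * v (l, j))) i := rfl
    -- nontrivial roots kill the twisted sums
    have hSzero : ∀ μ : ℂ, μ ^ (q + 1) = 1 → μ ≠ 1 → ∀ j : Fin n,
        (∑ l : Fin q, μ ^ (l : ℕ) * v (l, j)) = 0 := by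
      intro μ hμ hμ1 j
      have hker : ((μ • N - Nᵀ) *ᵥ (fun j => ∑ l : Fin q, μ ^ (l : ℕ) * v (l, j))) = 0 := by
        funext i
        have h := master μ hμ i
        rw [hMVS2 N μ 1 i, hMVS2 Nᵀ μ 1 i, hMVS2 N μ 2 i] at h
        have h2 : (1 - μ) * (μ * (N *ᵥ (fun j => ∑ l : Fin q, μ ^ (l : ℕ) * v (l, j))) i
            - (Nᵀ *ᵥ (fun j => ∑ l : Fin q, μ ^ (l : ℕ) * v (l, j))) i) = 0 := by
          linear_combination h - hr i
        have h3 := (mul_eq_zero.mp h2).resolve_left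
          (sub_ne_zero.mpr fun hh => hμ1 hh.symm)
        simp only [Matrix.sub_mulVec, Matrix.smul_mulVec, Pi.sub_apply,
          Pi.smul_apply, smul_eq_mul, Pi.zero_apply]
        linear_combination h3
      by_contra hne
      refine H μ hμ hμ1 (Matrix.exists_mulVec_eq_zero_iff.mp
        ⟨(fun j => ∑ l : Fin q, μ ^ (l : ℕ) * v (l, j)), ?_, hker⟩)
      intro hzero
      exact hne (congrFun hzero j)
    -- the primitive root
    have hζ := Complex.isPrimitiveRoot_exp (q + 1) (by omega)
    set ζ : ℂ := Complex.exp (2 * Real.pi * Complex.I / ((q + 1 : ℕ) : ℂ)) with hζdef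
    have hζp : ζ ^ (q + 1) = 1 := hζ.pow_eq_one
    have hζ1 : ζ ≠ 1 := by
      intro h
      have := hζ.pow_ne_one_of_pos_of_lt (l := 1) one_ne_zero (by omega)
      rw [pow_one] at this
      exact this h
    have hζ0 : ζ ≠ 0 := by
      intro h
      rw [h, zero_pow (by omega)] at hζp
      exact zero_ne_one hζp
    -- geometric sums
    have hδ : ∀ d : ℕ, (∑ t ∈ Finset.range (q + 1), (ζ ^ d) ^ t)
        = if (q + 1) ∣ d then ((q + 1 : ℕ) : ℂ) else 0 := by
      intro d
      by_cases hd : (q + 1) ∣ d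
      · rw [if_pos hd]
        have h1 : ζ ^ d = 1 := (hζ.pow_eq_one_iff_dvd d).mpr hd
        simp [h1]
      · rw [if_neg hd]
        have h1 : ζ ^ d ≠ 1 := fun h => hd ((hζ.pow_eq_one_iff_dvd d).mp h)
        have h2 : (ζ ^ d) ^ (q + 1) = 1 := by
          rw [← pow_mul, mul_comm, pow_mul, hζp, one_pow]
        rw [geom_sum_eq h1, h2]
        simp
    -- Fourier inversion: all components of v are equal to the average
    have hfour : ∀ (k0 : Fin q) (j : Fin n),
        ((q + 1 : ℕ) : ℂ) * v (k0, j) = ∑ l : Fin q, v (l, j) := by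
      intro k0 j
      have hX1 : (∑ t ∈ Finset.range (q + 1),
            (ζ ^ (q + 1 - (k0 : ℕ))) ^ t * (∑ l : Fin q, (ζ ^ t) ^ (l : ℕ) * v (l, j)))
          = ∑ l : Fin q, v (l, j) := by
        rw [Finset.sum_eq_single 0]
        · simp
        · intro t ht htne
          have h1 : (ζ ^ t) ^ (q + 1) = 1 := by
            rw [← pow_mul, mul_comm, pow_mul, hζp, one_pow]
          have h2 : ζ ^ t ≠ 1 :=
            hζ.pow_ne_one_of_pos_of_lt htne (Finset.mem_range.mp ht)
          rw [hSzero (ζ ^ t) h1 h2 j, mul_zero]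
        · intro h
          exact absurd (Finset.mem_range.mpr (by omega)) h
      have hX2 : (∑ t ∈ Finset.range (q + 1),
            (ζ ^ (q + 1 - (k0 : ℕ))) ^ t * (∑ l : Fin q, (ζ ^ t) ^ (l : ℕ) * v (l, j)))
          = ((q + 1 : ℕ) : ℂ) * v (k0, j) := by
        have hcomb : ∀ (t : ℕ) (l : Fin q),
            (ζ ^ (q + 1 - (k0 : ℕ))) ^ t * ((ζ ^ t) ^ (l : ℕ) * v (l, j))
              = (ζ ^ (q + 1 - (k0 : ℕ) + (l : ℕ))) ^ t * v (l, j) := by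
          intro t l
          rw [← pow_mul, ← pow_mul, ← pow_mul, ← mul_assoc, ← pow_add,
            show (q + 1 - (k0 : ℕ)) * t + t * (l : ℕ)
              = (q + 1 - (k0 : ℕ) + (l : ℕ)) * t from by ring]
        calc (∑ t ∈ Finset.range (q + 1),
              (ζ ^ (q + 1 - (k0 : ℕ))) ^ t * (∑ l : Fin q, (ζ ^ t) ^ (l : ℕ) * v (l, j)))
            = ∑ t ∈ Finset.range (q + 1), ∑ l : Fin q,
                (ζ ^ (q + 1 - (k0 : ℕ) + (l : ℕ))) ^ t * v (l, j) := by
              refine Finset.sum_congr rfl fun t _ => ?_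
              rw [Finset.mul_sum]
              exact Finset.sum_congr rfl fun l _ => hcomb t l
          _ = ∑ l : Fin q, ∑ t ∈ Finset.range (q + 1),
                (ζ ^ (q + 1 - (k0 : ℕ) + (l : ℕ))) ^ t * v (l, j) := Finset.sum_comm
          _ = ∑ l : Fin q, (if (l : ℕ) = (k0 : ℕ) then ((q + 1 : ℕ) : ℂ) * v (l, j) else 0) := by
              refine Finset.sum_congr rfl fun l _ => ?_
              rw [← Finset.sum_mul, hδ (q + 1 - (k0 : ℕ) + (l : ℕ))]
              have hiff : ((q + 1) ∣ (q + 1 - (k0 : ℕ) + (l : ℕ))) ↔ (l : ℕ) = (k0 : ℕ) := by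
                have hk0 := k0.isLt
                have hl := l.isLt
                constructor
                · intro hdvd
                  have h1 : q + 1 - (k0 : ℕ) + (l : ℕ) = q + 1 :=
                    Nat.eq_of_dvd_of_lt_two_mul (by omega) hdvd (by omega)
                  omega
                · intro h
                  exact ⟨1, by omega⟩
              by_cases hc : (l : ℕ) = (k0 : ℕ)
              · rw [if_pos (hiff.mpr hc), if_pos hc]
              · rw [if_neg (fun hd => hc (hiff.mp hd)), if_neg hc, zero_mul]
          _ = ((q + 1 : ℕ) : ℂ) * v (k0, j) := by
              rw [auxD (k0 : ℕ) k0.isLt (fun l => ((q + 1 : ℕ) : ℂ) * v (l, j))]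
      rw [← hX1, hX2]
    -- conclude v = 0
    apply hv0
    funext x
    obtain ⟨k0, j⟩ := x
    have hs : (∑ l : Fin q, v (l, j)) = 0 := by
      have h0 := hSzero ζ hζp hζ1 j
      have h1 : ((q + 1 : ℕ) : ℂ) * (∑ l : Fin q, ζ ^ (l : ℕ) * v (l, j))
          = (∑ l : Fin q, ζ ^ (l : ℕ)) * (∑ l : Fin q, v (l, j)) := by
        rw [Finset.mul_sum, Finset.sum_mul]
        refine Finset.sum_congr rfl fun l _ => ?_
        rw [show (∑ l : Fin q, v (l, j)) = ((q + 1 : ℕ) : ℂ) * v (l, j) from (hfour l j).symm]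
        ring
      rw [h0, mul_zero] at h1
      have hgeo : (∑ l : Fin q, ζ ^ (l : ℕ)) = -ζ ^ q := by
        have h2 : (∑ t ∈ Finset.range (q + 1), ζ ^ t) = 0 := by
          rw [geom_sum_eq hζ1, hζp]
          simp
        rw [Fin.sum_univ_eq_sum_range (fun m => ζ ^ m)]
        rw [Finset.sum_range_succ] at h2
        linear_combination h2
      rw [hgeo] at h1
      have := h1.symm
      rcases mul_eq_zero.mp this with h | h
      · exact absurd (neg_eq_zero.mp h) (pow_ne_zero q hζ0)
      · exact h
    have := hfour k0 j
    rw [hs] at this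
    have hq1 : ((q + 1 : ℕ) : ℂ) ≠ 0 := Nat.cast_ne_zero.mpr (by omega)
    have : v (k0, j) = 0 := by
      rcases mul_eq_zero.mp this with h | h
      · exact absurd h hq1
      · exact h
    simpa using this

/-- The presentation matrix `M_p` of the first homology of the `p`-fold cyclic
branched cover is nonsingular over `ℚ` iff no `p`-th root of unity `ω ≠ 1` is a
root of `det (t M - Mᵀ)`. -/
theorem stmt14 (n p : ℕ) (hp : 2 ≤ p) (M : Matrix (Fin n) (Fin n) ℤ)
    (Mq : Matrix (Fin n) (Fin n) ℚ) (hMq : Mq = M.map (Int.cast : ℤ → ℚ))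
    (Mc : Matrix (Fin n) (Fin n) ℂ) (hMc : Mc = M.map (Int.cast : ℤ → ℂ))
    (Mp : Matrix (Fin (p - 1) × Fin n) (Fin (p - 1) × Fin n) ℚ)
    (hMp : Mp = Matrix.of fun ki lj =>
      if ki.1 = lj.1 then (Mq + Mqᵀ) ki.2 lj.2
      else if (lj.1 : ℕ) = (ki.1 : ℕ) + 1 then (-Mqᵀ) ki.2 lj.2
      else if (ki.1 : ℕ) = (lj.1 : ℕ) + 1 then (-Mq) ki.2 lj.2
      else 0) :
    Mp.det ≠ 0 ↔ ∀ ω : ℂ, ω ^ p = 1 → ω ≠ 1 → (ω • Mc - Mcᵀ).det ≠ 0 := by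
  have hqp : (p - 1) + 1 = p := by omega
  have hmap : Mp.map (algebraMap ℚ ℂ) = Matrix.of fun ki lj =>
      if ki.1 = lj.1 then (Mc + Mcᵀ) ki.2 lj.2
      else if (lj.1 : ℕ) = (ki.1 : ℕ) + 1 then (-Mcᵀ) ki.2 lj.2
      else if (ki.1 : ℕ) = (lj.1 : ℕ) + 1 then (-Mc) ki.2 lj.2
      else 0 := by
    ext ⟨k, i⟩ ⟨l, j⟩
    simp only [hMp, hMq, hMc, Matrix.map_apply, Matrix.of_apply,
      Matrix.add_apply, Matrix.neg_apply, Matrix.transpose_apply,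
      apply_ite (algebraMap ℚ ℂ)]
    push_cast
    rfl
  have hdetiff : Mp.det ≠ 0 ↔ (Mp.map (algebraMap ℚ ℂ)).det ≠ 0 := by
    have h1 : (algebraMap ℚ ℂ) Mp.det = (Mp.map (algebraMap ℚ ℂ)).det :=
      RingHom.map_det (algebraMap ℚ ℂ) Mp
    rw [← h1]
    exact (map_ne_zero_iff _ (algebraMap ℚ ℂ).injective).symm
  rw [hdetiff]
  rw [show (∀ ω : ℂ, ω ^ p = 1 → ω ≠ 1 → (ω • Mc - Mcᵀ).det ≠ 0)
      = (∀ ω : ℂ, ω ^ ((p-1) + 1) = 1 → ω ≠ 1 → (ω • Mc - Mcᵀ).det ≠ 0) by rw [hqp]]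
  exact key14 n (p - 1) (by omega) Mc _ hmap
end
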